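/- arXiv:1512.06655 — 6 statements merged into one kernel-verified Lean document; each statement's English description precedes it below -/
import Mathlib

section
/- For all natural numbers r and n with 3 ≤ r ≤ n, log p(n,r) ≤ (1/(n−r+1)) · C(n,r) · log( e·(n−r+1) ). -/
open Matroid Set Filter Real

namespace PavingEnum

/-- The rank of a matroid: the largest cardinality of a base. -/
noncomputable def mrk {α : Type*} (M : Matroid α) : ℕ :=
  sSup {n : ℕ | ∃ B, M.IsBase B ∧ B.ncard = n}

/-- The rank of a set in a matroid: the largest cardinality of an
independent subset of the set. -/
noncomputable def mrnk {α : Type*} (M : Matroid α) (X : Set α) : ℕ :=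
  sSup {n : ℕ | ∃ I, I ⊆ X ∧ M.Indep I ∧ I.ncard = n}

/-- A circuit is a minimal dependent set. -/
def IsCircuit {α : Type*} (M : Matroid α) (C : Set α) : Prop :=
  M.Dep C ∧ ∀ D, D ⊂ C → M.Indep D

/-- A matroid of rank `r` is paving if every circuit has cardinality at least `r`. -/
def Paving {α : Type*} (M : Matroid α) : Prop :=
  ∀ C, IsCircuit M C → (mrk M : ℕ∞) ≤ C.encard

/-- A matroid is sparse paving if both it and its dual are paving. -/
def SparsePaving {α : Type*} (M : Matroid α) : Prop :=
  Paving M ∧ Paving M✶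

/-- `numMatroids n r` : the number of matroids on the ground set `{1, …, n}` of rank `r`. -/
noncomputable def numMatroids (n r : ℕ) : ℕ :=
  {M : Matroid (Fin n) | M.E = Set.univ ∧ mrk M = r}.ncard

/-- `numPaving n r` : the number of paving matroids on `{1, …, n}` of rank `r`. -/
noncomputable def numPaving (n r : ℕ) : ℕ :=
  {M : Matroid (Fin n) | M.E = Set.univ ∧ mrk M = r ∧ Paving M}.ncard

/-- `numSparsePaving n r` : the number of sparse paving matroids on `{1, …, n}` of rank `r`. -/
noncomputable def numSparsePaving (n r : ℕ) : ℕ :=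
  {M : Matroid (Fin n) | M.E = Set.univ ∧ mrk M = r ∧ SparsePaving M}.ncard

end PavingEnum

open PavingEnum

open scoped Finset

/-!
A paving matroid of rank `r` is determined by its dependent `r`-sets, which are the `r`-subsets
of its hyperplanes with at least `r` elements; two such hyperplanes share no `(r - 1)`-set.
Fixing an `(r - 1)`-subset `S` of each of them, the sets `insert x S` (`x ∈ H \ S`) form a star
whose members pairwise meet in `r - 1` elements, while members of different stars meet in fewer,
so the union of all stars is an injective code, from which each `H` is read off as a union.
As `r * (|H| - r + 1) ≤ C(|H|, r - 1)` and the `(r - 1)`-subsets of distinct hyperplanes are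
disjoint, the code has at most `t = C(n, r - 1) / r = N / (n - r + 1)` members, `N = C(n, r)`.
Hence `p(n, r) ≤ ∑_{k ≤ t} C(N, k) ≤ m ^ t * e ^ (N / m)` for every `m ≥ 1`;
take `m = n - r + 1`.
-/

namespace Matroid

variable {α : Type*} {M : Matroid α}

lemma isCircuit_iff_pavingEnum_isCircuit {C : Set α} :
    M.IsCircuit C ↔ PavingEnum.IsCircuit M C :=
  isCircuit_iff_forall_ssubset

lemma IsBase.ncard_eq_mrk {B : Set α} (hB : M.IsBase B) : B.ncard = mrk M := by
  have hranks : {k | ∃ B', M.IsBase B' ∧ B'.ncard = k} = {B.ncard} := by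
    ext k
    exact ⟨fun ⟨B', hB', hk⟩ => hk ▸ hB'.ncard_eq_ncard_of_isBase hB,
      fun hk => ⟨B, hB, hk.symm⟩⟩
  simp [mrk, hranks]

lemma eRank_eq_mrk [M.RankFinite] : M.eRank = mrk M := by
  obtain ⟨B, hB⟩ := M.exists_isBase
  rw [← hB.encard_eq_eRank, ← hB.ncard_eq_mrk, hB.finite.cast_ncard_eq]

lemma Indep.dep_of_subset_closure {S D : Set α} (hS : M.Indep S) (hD : D ⊆ M.closure S)
    (hlt : S.encard < D.encard) : M.Dep D := by
  refine ⟨fun hDi => ?_, hD.trans (M.closure_subset_ground S)⟩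
  have := hDi.encard_le_eRk_of_subset hD
  rw [eRk_closure_eq, hS.eRk_eq_encard] at this
  exact this.not_gt hlt

lemma Indep.closure_eq_of_subset_closure {S T : Set α} (hS : M.Indep S) (hT : M.Indep T)
    (hTfin : T.Finite) (hTS : T ⊆ M.closure S) (hcard : S.encard ≤ T.encard) :
    M.closure T = M.closure S := by
  have hbasis : M.IsBasis T (M.closure S) := hT.isBasis_of_eRk_ge hTfin hTS
    (by rw [eRk_closure_eq, hS.eRk_eq_encard, hT.eRk_eq_encard]; exact hcard)
  rw [hbasis.closure_eq_closure, closure_closure]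

end Matroid

lemma Nat.succ_mul_sub_le_choose {k h : ℕ} (hk : 2 ≤ k) (hkh : k < h) :
    (k + 1) * (h - k) ≤ h.choose k := by
  obtain ⟨d, rfl⟩ : ∃ d, h = k + 1 + d := ⟨h - (k + 1), by omega⟩
  rw [show k + 1 + d - k = d + 1 by omega]
  clear hkh
  induction d with
  | zero => simp [Nat.choose_succ_self_right]
  | succ d ih =>
    obtain ⟨j, rfl⟩ : ∃ j, k = j + 1 := ⟨k - 1, by omega⟩
    have hpair : j + 2 ≤ (j + 2).choose 2 := by
      rw [Nat.choose_two_right, Nat.le_div_iff_mul_le two_pos]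
      exact Nat.mul_le_mul_left _ (by omega)
    have hj : j + 2 ≤ (j + 1 + 1 + d).choose j :=
      calc j + 2 ≤ (j + 2).choose j := by rwa [Nat.choose_symm_add]
        _ ≤ _ := Nat.choose_le_choose j (by omega)
    rw [show j + 1 + 1 + (d + 1) = (j + 1 + 1 + d) + 1 by ring, Nat.choose_succ_succ]
    linarith

lemma Finset.sum_choose_card_le {α : Type*} [Fintype α] [DecidableEq α] {k : ℕ}
    (𝓕 : Finset (Finset α))
    (h𝓕 : ∀ F ∈ 𝓕, ∀ F' ∈ 𝓕, ∀ T : Finset α, #T = k → T ⊆ F → T ⊆ F' → F = F') :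
    ∑ F ∈ 𝓕, (#F).choose k ≤ (Fintype.card α).choose k := by
  have hdisj : (𝓕 : Set (Finset α)).PairwiseDisjoint (Finset.powersetCard k) := by
    intro F hF F' hF' hne
    refine Finset.disjoint_left.2 fun T hT hT' => hne ?_
    rw [Finset.mem_powersetCard] at hT hT'
    exact h𝓕 F hF F' hF' T hT.2 hT.1 hT'.1
  calc ∑ F ∈ 𝓕, (#F).choose k = #(𝓕.biUnion (Finset.powersetCard k)) := by
        simp [Finset.card_biUnion hdisj]
    _ ≤ #(Finset.powersetCard k (Finset.univ : Finset α)) :=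
        Finset.card_le_card fun T hT => by
          obtain ⟨F, -, hT⟩ := Finset.mem_biUnion.1 hT
          exact Finset.mem_powersetCard.2
            ⟨Finset.subset_univ T, (Finset.mem_powersetCard.1 hT).2⟩
    _ = (Fintype.card α).choose k := by simp

lemma sum_range_choose_le_pow_mul_exp (N t : ℕ) {m : ℝ} (hm : 1 ≤ m) :
    ∑ k ∈ Finset.range (t + 1), (N.choose k : ℝ) ≤ m ^ t * exp (N / m) := by
  have hx : 0 < m⁻¹ := by positivity
  have hx1 : m⁻¹ ≤ 1 := inv_le_one_of_one_le₀ hm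
  have hterm : ∀ k, 0 ≤ (N.choose k : ℝ) * m⁻¹ ^ k := fun k => by positivity
  suffices m⁻¹ ^ t * ∑ k ∈ Finset.range (t + 1), (N.choose k : ℝ) ≤ exp (N / m) by
    rwa [inv_pow, inv_mul_le_iff₀ (by positivity)] at this
  calc m⁻¹ ^ t * ∑ k ∈ Finset.range (t + 1), (N.choose k : ℝ)
      = ∑ k ∈ Finset.range (t + 1), (N.choose k : ℝ) * m⁻¹ ^ t := by
        rw [Finset.mul_sum]; simp only [mul_comm]
    _ ≤ ∑ k ∈ Finset.range (t + 1), (N.choose k : ℝ) * m⁻¹ ^ k :=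
        Finset.sum_le_sum fun k hk => mul_le_mul_of_nonneg_left
          (pow_le_pow_of_le_one hx.le hx1 (by simpa [Nat.lt_succ_iff] using hk)) (by positivity)
    _ = ∑ k ∈ Finset.range (t + 1) with k ≤ N, (N.choose k : ℝ) * m⁻¹ ^ k :=
        (Finset.sum_filter_of_ne fun k _ hk => by
          by_contra hkN
          exact hk (by rw [Nat.choose_eq_zero_of_lt (by omega)]; simp)).symm
    _ ≤ ∑ k ∈ Finset.range (N + 1), (N.choose k : ℝ) * m⁻¹ ^ k :=
        Finset.sum_le_sum_of_subset_of_nonneg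
          (fun k hk => Finset.mem_range.2 (Nat.lt_succ_of_le (Finset.mem_filter.1 hk).2))
          fun k _ _ => hterm k
    _ = (1 + m⁻¹) ^ N := by
        rw [add_comm (1 : ℝ), add_pow]; simp only [one_pow, mul_one, mul_comm]
    _ ≤ exp m⁻¹ ^ N :=
        pow_le_pow_left₀ (by positivity) (by linarith [add_one_le_exp m⁻¹]) N
    _ = exp (N / m) := by rw [← exp_nat_mul, div_eq_mul_inv]

lemma log_le_of_le_sum_range_choose {p N t : ℕ} {m : ℝ}
    (hp : p ≤ ∑ k ∈ Finset.range (t + 1), N.choose k) (hm : 1 ≤ m) (ht : t * m ≤ N) :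
    log p ≤ 1 / m * N * log (exp 1 * m) := by
  have hlog : log (exp 1 * m) = 1 + log m := by
    rw [log_mul (exp_ne_zero 1) (by positivity), log_exp]
  have hlogm : 0 ≤ log m := log_nonneg hm
  rcases p.eq_zero_or_pos with rfl | hp0
  · rw [Nat.cast_zero, log_zero, hlog]
    positivity
  have hcount : (p : ℝ) ≤ m ^ t * exp (N / m) :=
    (by exact_mod_cast hp : (p : ℝ) ≤ ∑ k ∈ Finset.range (t + 1), (N.choose k : ℝ)).trans
      (sum_range_choose_le_pow_mul_exp N t hm)
  calc log p ≤ log (m ^ t * exp (N / m)) := log_le_log (by exact_mod_cast hp0) hcount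
    _ = t * log m + N / m := by
        rw [log_mul (by positivity) (exp_ne_zero _), log_pow, log_exp]
    _ ≤ N / m * log m + N / m := by
        gcongr
        rwa [le_div_iff₀ (by positivity)]
    _ = 1 / m * N * log (exp 1 * m) := by rw [hlog]; ring

namespace PavingEnum

section Paving

variable {α : Type*} {M : Matroid α}

lemma Paving.indep_of_card_lt (hM : Paving M) {S : Finset α} (hSE : ↑S ⊆ M.E)
    (hS : #S < mrk M) : M.Indep ↑S := by
  by_contra hSi
  obtain ⟨C, hCS, hC⟩ := Matroid.Dep.exists_isCircuit_subset ⟨hSi, hSE⟩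
  have := (hM C (isCircuit_iff_pavingEnum_isCircuit.1 hC)).trans (encard_le_encard hCS)
  rw [encard_coe_eq_coe_finsetCard, Nat.cast_le] at this
  omega

lemma Paving.eq_of_dep_iff [M.Finite] {M' : Matroid α} (hM : Paving M) (hM' : Paving M')
    (hE : M.E = M'.E) (hr : mrk M = mrk M')
    (hdep : ∀ A : Finset α, #A = mrk M → (M.Dep ↑A ↔ M'.Dep ↑A)) : M = M' := by
  refine ext_indep hE fun I hIE => ?_
  obtain ⟨I, rfl⟩ := (M.ground_finite.subset hIE).exists_finset_coe
  have hIE' : ↑I ⊆ M'.E := hE ▸ hIE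
  have : M'.Finite := ⟨hE ▸ M.ground_finite⟩
  rcases lt_trichotomy #I (mrk M) with hlt | heq | hgt
  · exact iff_of_true (hM.indep_of_card_lt hIE hlt) (hM'.indep_of_card_lt hIE' (hr ▸ hlt))
  · rw [← not_dep_iff hIE, ← not_dep_iff hIE', hdep I heq]
  · have hsmall {N : Matroid α} [N.RankFinite] (hN : mrk N = mrk M) : ¬ N.Indep ↑I := by
      intro hI
      have := hI.encard_le_eRank
      rw [eRank_eq_mrk, encard_coe_eq_coe_finsetCard, Nat.cast_le] at this
      omega
    exact iff_of_false (hsmall rfl) (hsmall hr.symm)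

variable [DecidableEq α]

lemma Paving.closure_eq_of_dep {A T : Finset α} (hM : Paving M) (hA : M.Dep ↑A)
    (hAr : #A = mrk M) (hTA : ↑T ⊆ M.closure ↑A) (hTr : #T + 1 = mrk M) :
    M.closure ↑T = M.closure ↑A := by
  obtain ⟨a, ha⟩ : A.Nonempty := Finset.card_pos.1 (by omega)
  have hS : M.Indep ↑(A.erase a) := hM.indep_of_card_lt
    ((Finset.coe_subset.2 (A.erase_subset a)).trans hA.subset_ground)
    (by rw [Finset.card_erase_of_mem ha]; omega)
  have hSA : M.closure ↑(A.erase a) = M.closure ↑A := by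
    have haS : a ∈ M.closure ↑(A.erase a) := by
      refine (hS.insert_dep_iff.1 ?_).1
      rwa [← Finset.coe_insert, Finset.insert_erase ha]
    rw [← closure_insert_eq_of_mem_closure haS, ← Finset.coe_insert, Finset.insert_erase ha]
  have hT : M.Indep ↑T := hM.indep_of_card_lt (hTA.trans (M.closure_subset_ground _)) (by omega)
  rw [← hSA] at hTA ⊢
  refine hS.closure_eq_of_subset_closure hT T.finite_toSet hTA ?_
  rw [encard_coe_eq_coe_finsetCard, encard_coe_eq_coe_finsetCard, Finset.card_erase_of_mem ha]
  exact_mod_cast (by omega : #A - 1 ≤ #T)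

end Paving

section StarFamily

variable {α : Type*}

noncomputable def subsetOfCard (k : ℕ) (F : Finset α) : Finset α :=
  (F.exists_subset_card_eq (min_le_right k #F)).choose

lemma subsetOfCard_subset (k : ℕ) (F : Finset α) : subsetOfCard k F ⊆ F :=
  (F.exists_subset_card_eq (min_le_right k #F)).choose_spec.1

lemma card_subsetOfCard (k : ℕ) (F : Finset α) : #(subsetOfCard k F) = min k #F :=
  (F.exists_subset_card_eq (min_le_right k #F)).choose_spec.2

variable [DecidableEq α]

noncomputable def starFamily (r : ℕ) (F : Finset α) : Finset (Finset α) :=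
  (F \ subsetOfCard (r - 1) F).image (insert · (subsetOfCard (r - 1) F))

lemma mem_starFamily {r : ℕ} {F B : Finset α} :
    B ∈ starFamily r F ↔
      ∃ x ∈ F, x ∉ subsetOfCard (r - 1) F ∧ insert x (subsetOfCard (r - 1) F) = B := by
  simp [starFamily, and_assoc]

lemma subset_of_mem_starFamily {r : ℕ} {F B : Finset α} (hB : B ∈ starFamily r F) :
    B ⊆ F := by
  obtain ⟨x, hx, -, rfl⟩ := mem_starFamily.1 hB
  exact Finset.insert_subset hx (subsetOfCard_subset _ F)

lemma card_of_mem_starFamily {r : ℕ} {F B : Finset α} (hr : 1 ≤ r) (hrF : r ≤ #F)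
    (hB : B ∈ starFamily r F) : #B = r := by
  obtain ⟨x, -, hxc, rfl⟩ := mem_starFamily.1 hB
  rw [Finset.card_insert_of_notMem hxc, card_subsetOfCard]
  omega

lemma pred_le_card_inter_of_mem_starFamily {r : ℕ} {F B C : Finset α} (hrF : r ≤ #F)
    (hB : B ∈ starFamily r F) (hC : C ∈ starFamily r F) : r - 1 ≤ #(B ∩ C) := by
  obtain ⟨x, -, -, rfl⟩ := mem_starFamily.1 hB
  obtain ⟨y, -, -, rfl⟩ := mem_starFamily.1 hC
  calc r - 1 = #(subsetOfCard (r - 1) F) := by rw [card_subsetOfCard]; omega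
    _ ≤ _ := Finset.card_le_card
      (Finset.subset_inter (Finset.subset_insert _ _) (Finset.subset_insert _ _))

lemma exists_mem_starFamily {r : ℕ} {F : Finset α} (hrF : r ≤ #F) {x : α} (hx : x ∈ F) :
    ∃ B ∈ starFamily r F, x ∈ B := by
  by_cases hxc : x ∈ subsetOfCard (r - 1) F
  · obtain ⟨y, hy⟩ : (F \ subsetOfCard (r - 1) F).Nonempty := by
      have := Finset.card_pos.2 ⟨x, hxc⟩
      rw [← Finset.card_pos, Finset.card_sdiff_of_subset (subsetOfCard_subset _ F)]
      rw [card_subsetOfCard] at this ⊢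
      omega
    exact ⟨_, Finset.mem_image_of_mem _ hy, Finset.mem_insert_of_mem hxc⟩
  · exact ⟨_, Finset.mem_image_of_mem _ (Finset.mem_sdiff.2 ⟨hx, hxc⟩),
      Finset.mem_insert_self x _⟩

lemma card_starFamily_le (r : ℕ) (F : Finset α) : #(starFamily r F) ≤ #F + 1 - r := by
  refine Finset.card_image_le.trans ?_
  rw [Finset.card_sdiff_of_subset (subsetOfCard_subset _ F), card_subsetOfCard]
  omega

end StarFamily

section Coding

open Classical

variable {α : Type*} [Fintype α] {M : Matroid α}

noncomputable def depSets (M : Matroid α) : Finset (Finset α) :=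
  {A | #A = mrk M ∧ M.Dep ↑A}

/-- The closures of the dependent `r`-sets of a rank-`r` matroid; when the matroid is paving,
these are its hyperplanes with at least `r` elements. -/
noncomputable def largeHyperplanes (M : Matroid α) : Finset (Finset α) :=
  (depSets M).image fun A : Finset α => (M.closure (A : Set α)).toFinset

noncomputable def code (M : Matroid α) : Finset (Finset α) :=
  (largeHyperplanes M).biUnion (starFamily (mrk M))

/-- Each large hyperplane is recovered as the union of the members of the code meeting a
given member of its star in at least `r - 1` elements. -/
noncomputable def decode (r : ℕ) (W : Finset (Finset α)) : Finset (Finset α) :=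
  {D | #D = r ∧ ∃ B ∈ W, ∀ x ∈ D, ∃ C ∈ W, r - 1 ≤ #(B ∩ C) ∧ x ∈ C}

lemma mem_depSets {A : Finset α} : A ∈ depSets M ↔ #A = mrk M ∧ M.Dep ↑A := by
  simp [depSets]

lemma mem_largeHyperplanes {F : Finset α} :
    F ∈ largeHyperplanes M ↔
      ∃ A : Finset α, (#A = mrk M ∧ M.Dep ↑A) ∧ M.closure ↑A = ↑F := by
  simp only [largeHyperplanes, Finset.mem_image, mem_depSets]
  refine exists_congr fun A => and_congr_right fun _ => ?_
  rw [← Finset.coe_inj, Set.coe_toFinset]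

lemma le_card_of_mem_largeHyperplanes {F : Finset α} (hF : F ∈ largeHyperplanes M) :
    mrk M ≤ #F := by
  obtain ⟨A, ⟨hAr, hA⟩, hAF⟩ := mem_largeHyperplanes.1 hF
  rw [← hAr]
  refine Finset.card_le_card (Finset.coe_subset.1 ?_)
  rw [← hAF]
  exact M.subset_closure _ hA.subset_ground

lemma one_le_mrk_of_mem_largeHyperplanes {F : Finset α} (hF : F ∈ largeHyperplanes M) :
    1 ≤ mrk M := by
  obtain ⟨A, ⟨hAr, hA⟩, -⟩ := mem_largeHyperplanes.1 hF
  rw [← hAr, Nat.one_le_iff_ne_zero, Ne, Finset.card_eq_zero, ← Finset.coe_eq_empty]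
  exact hA.nonempty.ne_empty

lemma Paving.closure_eq_of_mem_largeHyperplanes (hM : Paving M) {F T : Finset α}
    (hF : F ∈ largeHyperplanes M) (hTF : T ⊆ F) (hT : #T + 1 = mrk M) :
    M.closure ↑T = ↑F := by
  obtain ⟨A, ⟨hAr, hA⟩, hAF⟩ := mem_largeHyperplanes.1 hF
  rw [← hAF]
  exact hM.closure_eq_of_dep hA hAr (hAF ▸ Finset.coe_subset.2 hTF) hT

lemma Paving.eq_of_subset_of_mem_largeHyperplanes (hM : Paving M) {F F' T : Finset α}
    (hF : F ∈ largeHyperplanes M) (hF' : F' ∈ largeHyperplanes M) (hTF : T ⊆ F)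
    (hTF' : T ⊆ F') (hT : #T + 1 = mrk M) : F = F' :=
  Finset.coe_injective <| (hM.closure_eq_of_mem_largeHyperplanes hF hTF hT).symm.trans
    (hM.closure_eq_of_mem_largeHyperplanes hF' hTF' hT)

lemma Paving.dep_of_subset_mem_largeHyperplanes (hM : Paving M) {F D : Finset α}
    (hF : F ∈ largeHyperplanes M) (hDF : D ⊆ F) (hD : #D = mrk M) : M.Dep ↑D := by
  have hr := one_le_mrk_of_mem_largeHyperplanes hF
  obtain ⟨T, hTD, hT⟩ := D.exists_subset_card_eq (Nat.sub_le #D 1)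
  have hTF : M.closure ↑T = ↑F :=
    hM.closure_eq_of_mem_largeHyperplanes hF (hTD.trans hDF) (by omega)
  have hTi : M.Indep ↑T := hM.indep_of_card_lt
    ((Finset.coe_subset.2 (hTD.trans hDF)).trans (hTF ▸ M.closure_subset_ground _)) (by omega)
  refine hTi.dep_of_subset_closure (hTF ▸ Finset.coe_subset.2 hDF) ?_
  rw [Set.encard_coe_eq_coe_finsetCard, Set.encard_coe_eq_coe_finsetCard, Nat.cast_lt]
  omega

lemma card_of_mem_code {B : Finset α} (hB : B ∈ code M) : #B = mrk M := by
  obtain ⟨F, hF, hBF⟩ := Finset.mem_biUnion.1 hB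
  exact card_of_mem_starFamily (one_le_mrk_of_mem_largeHyperplanes hF)
    (le_card_of_mem_largeHyperplanes hF) hBF

lemma Paving.decode_code (hM : Paving M) : decode (mrk M) (code M) = depSets M := by
  ext D
  simp only [decode, depSets, Finset.mem_filter, Finset.mem_univ, true_and]
  constructor
  · rintro ⟨hD, B, hB, hcover⟩
    obtain ⟨F, hF, hBF⟩ := Finset.mem_biUnion.1 hB
    refine ⟨hD, hM.dep_of_subset_mem_largeHyperplanes hF (fun x hx => ?_) hD⟩
    obtain ⟨C, hC, hBC, hxC⟩ := hcover x hx
    obtain ⟨F', hF', hCF'⟩ := Finset.mem_biUnion.1 hC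
    obtain ⟨T, hT, hTcard⟩ := (B ∩ C).exists_subset_card_eq hBC
    have hF'F : F' = F := hM.eq_of_subset_of_mem_largeHyperplanes hF' hF
      ((hT.trans Finset.inter_subset_right).trans (subset_of_mem_starFamily hCF'))
      ((hT.trans Finset.inter_subset_left).trans (subset_of_mem_starFamily hBF))
      (by have := one_le_mrk_of_mem_largeHyperplanes hF; omega)
    exact hF'F ▸ subset_of_mem_starFamily hCF' hxC
  · rintro ⟨hD, hDdep⟩
    have hF : (M.closure ↑D).toFinset ∈ largeHyperplanes M :=
      mem_largeHyperplanes.2 ⟨D, ⟨hD, hDdep⟩, (Set.coe_toFinset _).symm⟩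
    have hDF : D ⊆ (M.closure ↑D).toFinset := fun x hx =>
      Set.mem_toFinset.2 (M.subset_closure _ hDdep.subset_ground hx)
    have hrF := le_card_of_mem_largeHyperplanes hF
    obtain ⟨x, hx⟩ := hDdep.nonempty
    obtain ⟨B, hB, -⟩ := exists_mem_starFamily hrF (hDF hx)
    refine ⟨hD, B, Finset.mem_biUnion.2 ⟨_, hF, hB⟩, fun y hy => ?_⟩
    obtain ⟨C, hC, hyC⟩ := exists_mem_starFamily hrF (hDF hy)
    exact ⟨C, Finset.mem_biUnion.2 ⟨_, hF, hC⟩,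
      pred_le_card_inter_of_mem_starFamily hrF hB hC, hyC⟩

lemma Paving.mrk_mul_card_code_le (hM : Paving M) (hr : 3 ≤ mrk M) :
    mrk M * #(code M) ≤ (Fintype.card α).choose (mrk M - 1) :=
  calc mrk M * #(code M) ≤ mrk M * ∑ F ∈ largeHyperplanes M, (#F + 1 - mrk M) :=
        Nat.mul_le_mul_left _ (Finset.card_biUnion_le.trans
          (Finset.sum_le_sum fun F _ => card_starFamily_le _ F))
    _ = ∑ F ∈ largeHyperplanes M, mrk M * (#F + 1 - mrk M) := Finset.mul_sum _ _ _
    _ ≤ ∑ F ∈ largeHyperplanes M, (#F).choose (mrk M - 1) := Finset.sum_le_sum fun F hF => by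
        have hrF := le_card_of_mem_largeHyperplanes hF
        have := Nat.succ_mul_sub_le_choose (k := mrk M - 1) (h := #F) (by omega) (by omega)
        rwa [Nat.sub_add_cancel (by omega), Nat.sub_sub_right _ (by omega)] at this
    _ ≤ (Fintype.card α).choose (mrk M - 1) :=
        Finset.sum_choose_card_le _ fun F hF F' hF' T hT hTF hTF' =>
          hM.eq_of_subset_of_mem_largeHyperplanes hF hF' hTF hTF' (by omega)

lemma Paving.card_code_le (hM : Paving M) (hr : 3 ≤ mrk M) (hrα : mrk M ≤ Fintype.card α) :
    #(code M) ≤ (Fintype.card α).choose (mrk M) / (Fintype.card α + 1 - mrk M) := by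
  set N := Fintype.card α
  set r := mrk M
  have hchoose : N.choose r * r = N.choose (r - 1) * (N + 1 - r) := by
    have := Nat.choose_succ_right_eq N (r - 1)
    rwa [Nat.sub_add_cancel (by omega), show N - (r - 1) = N + 1 - r by omega] at this
  rw [Nat.le_div_iff_mul_le (by omega)]
  refine Nat.le_of_mul_le_mul_left ?_ (by omega : 0 < r)
  calc r * (#(code M) * (N + 1 - r)) = (r * #(code M)) * (N + 1 - r) := by ring
    _ ≤ N.choose (r - 1) * (N + 1 - r) := Nat.mul_le_mul_right _ (hM.mrk_mul_card_code_le hr)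
    _ = r * N.choose r := by rw [← hchoose, mul_comm]

end Coding

lemma Paving.eq_of_code_eq {α : Type*} [Fintype α] {M M' : Matroid α} (hM : Paving M)
    (hM' : Paving M') (hE : M.E = M'.E) (hr : mrk M = mrk M') (h : code M = code M') :
    M = M' := by
  have hdep : depSets M = depSets M' := by
    rw [← hM.decode_code, ← hM'.decode_code, hr, h]
  refine hM.eq_of_dep_iff hM' hE hr fun A hA => ?_
  have hmem := congrArg (A ∈ ·) hdep
  simp only [mem_depSets, eq_iff_iff, hA, ← hr, true_and] at hmem
  exact hmem

lemma numPaving_le_sum_choose {n r : ℕ} (hr : 3 ≤ r) (hrn : r ≤ n) :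
    numPaving n r ≤
      ∑ k ∈ Finset.range (n.choose r / (n + 1 - r) + 1), (n.choose r).choose k := by
  set t := n.choose r / (n + 1 - r)
  set codes : Finset (Finset (Finset (Fin n))) := (Finset.range (t + 1)).biUnion
    fun k => Finset.powersetCard k (Finset.powersetCard r Finset.univ)
  have hmaps : ∀ M ∈ {M : Matroid (Fin n) | M.E = univ ∧ mrk M = r ∧ Paving M},
      code M ∈ (codes : Set _) := by
    rintro M ⟨-, hMr, hM⟩
    have hcard := hM.card_code_le (hMr ▸ hr) (by rwa [hMr, Fintype.card_fin])
    rw [hMr, Fintype.card_fin] at hcard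
    refine Finset.mem_biUnion.2 ⟨#(code M), Finset.mem_range.2 (by omega), ?_⟩
    refine Finset.mem_powersetCard.2 ⟨fun B hB => ?_, rfl⟩
    exact Finset.mem_powersetCard.2 ⟨Finset.subset_univ B, hMr ▸ card_of_mem_code hB⟩
  have hinj : InjOn code {M : Matroid (Fin n) | M.E = univ ∧ mrk M = r ∧ Paving M} :=
    fun M ⟨hE, hMr, hM⟩ M' ⟨hE', hM'r, hM'⟩ h =>
      hM.eq_of_code_eq hM' (hE.trans hE'.symm) (hMr.trans hM'r.symm) h
  calc numPaving n r ≤ (codes : Set (Finset (Finset (Fin n)))).ncard :=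
        ncard_le_ncard_of_injOn code hmaps hinj codes.finite_toSet
    _ = #codes := ncard_coe_finset codes
    _ ≤ _ := Finset.card_biUnion_le.trans_eq (by simp)

end PavingEnum

/-- For all 3 ≤ r ≤ n, log p(n,r) ≤ (1/(n−r+1)) · C(n,r) · log(e·(n−r+1)). -/
theorem paving_upper_bound (n r : ℕ) (hr : 3 ≤ r) (hrn : r ≤ n) :
    Real.log (numPaving n r) ≤
      (1 / ((n : ℝ) - r + 1)) * (n.choose r : ℝ) *
        Real.log (Real.exp 1 * ((n : ℝ) - r + 1)) := by
  have hm : ((n + 1 - r : ℕ) : ℝ) = n - r + 1 := by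
    rw [Nat.cast_sub (by omega)]; push_cast; ring
  refine log_le_of_le_sum_range_choose (numPaving_le_sum_choose hr hrn) ?_ ?_
  · rw [← hm]; exact_mod_cast (by omega : 1 ≤ n + 1 - r)
  · rw [← hm]; exact_mod_cast Nat.div_mul_le_self _ _
end

section
/- Let r ≥ 3 and n ≥ 2r, and let M be a matroid of rank r on a ground set of n elements. Then the number of essential flats of M of rank less than r is at most (1/(n−r+1)) · C(n,r). -/
open Matroid Set Filter Real

namespace PavingEnum

/-- `T` is the truncation of `N`: same ground set, and the independent sets of `T`
are exactly the independent sets of `N` of cardinality at most `rk N − 1`. -/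
def IsTruncationOf {α : Type*} (T N : Matroid α) : Prop :=
  T.E = N.E ∧ ∀ I : Set α, T.Indep I ↔ (N.Indep I ∧ I.ncard + 1 ≤ mrk N)

/-- `N` is an erection of `M` if `T(N) = M` or `N = M`. -/
def IsErection {α : Type*} (N M : Matroid α) : Prop :=
  IsTruncationOf M N ∨ N = M

/-- A set `X` is `k`-closed in `M` if it contains the closure of each of its
subsets of cardinality at most `k`. -/
def KClosed {α : Type*} (M : Matroid α) (k : ℕ) (X : Set α) : Prop :=
  ∀ Y ⊆ X, Y.encard ≤ (k : ℕ∞) → M.closure Y ⊆ X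

/-- The `k`-closure of a set: the intersection of all `k`-closed sets containing it. -/
def kClosure {α : Type*} (M : Matroid α) (k : ℕ) (X : Set α) : Set α :=
  ⋂₀ {Y | KClosed M k Y ∧ X ⊆ Y}

/-- A flat `F` of `M` of rank `k` is essential if the restriction `M|F` has a
nontrivial erection, i.e. there is a matroid on ground set `F` of rank `k+1`
whose truncation is `M|F`. -/
def IsEssentialFlat {α : Type*} (M : Matroid α) (F : Set α) : Prop :=
  M.IsFlat F ∧ ∃ N : Matroid α, N.E = F ∧ mrk N = mrnk M F + 1 ∧ IsTruncationOf (M ↾ F) N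

end PavingEnum

open PavingEnum


/-!
Let `n'` be the number of nonloops of `M`. Charge every `r`-set `X` of nonloops with a marked
element `y` to one flat: the closure of `X \ {y}` if `X` is independent, and otherwise the closure
of the elements whose removal makes `X` independent.

If `F` is essential of rank `k ≥ 1` and `N` is a nontrivial erection of `M ↾ F`, then the bases of
`N` are circuits of `M` spanning `F`. Completing such a circuit by an independent set of `M ／ F`,
or, when `F` is a hyperplane, adding an element outside `F` to one of its bases, yields at least
`r (n' + 1 - r)` marked sets charged to `F`. Of the `r C(n', r)` marked sets in total, this leaves
room for at most `C(n', r - 1) / r` essential flats of positive rank. The only possible essential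
flat of rank `0` is the nonempty set of loops, and then `n' < n`. Pascal's rule and
`r ≤ C(n - 1, r - 2)` then give `r · #essential ≤ C(n, r - 1) = r C(n, r) / (n - r + 1)`.
-/

namespace PavingEnum

variable {α β : Type*}

section Counting

lemma ncard_eq_sum_ncard_fiber {s : Set α} {t : Set β} (hs : s.Finite) (ht : t.Finite)
    {f : α → β} (hf : MapsTo f s t) :
    s.ncard = ∑ b ∈ ht.toFinset, {a ∈ s | f a = b}.ncard := by
  classical
  rw [ncard_eq_toFinset_card s hs,
    Finset.card_eq_sum_card_fiberwise (f := f) (t := ht.toFinset) (by simpa [MapsTo] using hf)]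
  refine Finset.sum_congr rfl fun b _ => ?_
  rw [← ncard_coe_finset]
  congr 1
  ext a
  simp

lemma ncard_mul_le_ncard_of_le_ncard_fiber {s : Set α} (hs : s.Finite) (f : α → β)
    {t : Set β} {q : ℕ} (hq : ∀ b ∈ t, q ≤ {a ∈ s | f a = b}.ncard) :
    t.ncard * q ≤ s.ncard := by
  by_cases ht : t.Finite
  · have hfib : ∀ b ∈ t, {a ∈ {a ∈ s | f a ∈ t} | f a = b} = {a ∈ s | f a = b} := by
      intro b hb
      ext a
      exact ⟨fun h => ⟨h.1.1, h.2⟩, fun h => ⟨⟨h.1, h.2 ▸ hb⟩, h.2⟩⟩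
    calc t.ncard * q = ∑ _b ∈ ht.toFinset, q := by
          rw [Finset.sum_const, smul_eq_mul, ncard_eq_toFinset_card t ht]
      _ ≤ ∑ b ∈ ht.toFinset, {a ∈ s | f a = b}.ncard :=
          Finset.sum_le_sum fun b hb => hq b (ht.mem_toFinset.1 hb)
      _ = {a ∈ s | f a ∈ t}.ncard := by
          rw [ncard_eq_sum_ncard_fiber (hs.subset (sep_subset _ _)) ht fun a ha => ha.2]
          exact Finset.sum_congr rfl fun b hb => by rw [hfib b (ht.mem_toFinset.1 hb)]
      _ ≤ s.ncard := ncard_le_ncard (sep_subset _ _) hs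
  · simp [Set.Infinite.ncard ht]

def flags (𝒳 : Set (Set α)) : Set (Set α × α) := {p | p.1 ∈ 𝒳 ∧ p.2 ∈ p.1}

lemma finite_flags {𝒳 : Set (Set α)} (h𝒳 : 𝒳.Finite) (hX : ∀ X ∈ 𝒳, X.Finite) :
    (flags 𝒳).Finite :=
  (h𝒳.prod (h𝒳.sUnion hX)).subset fun _ hp => ⟨hp.1, mem_sUnion_of_mem hp.2 hp.1⟩

lemma ncard_flags {𝒳 : Set (Set α)} (h𝒳 : 𝒳.Finite) {r : ℕ}
    (hX : ∀ X ∈ 𝒳, X.Finite ∧ X.ncard = r) : (flags 𝒳).ncard = 𝒳.ncard * r := by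
  rw [ncard_eq_sum_ncard_fiber (finite_flags h𝒳 fun X hX' => (hX X hX').1) h𝒳
      (f := Prod.fst) fun p hp => hp.1,
    Finset.sum_congr rfl (g := fun _ => r), Finset.sum_const, smul_eq_mul,
    ncard_eq_toFinset_card 𝒳 h𝒳]
  intro X hX'
  rw [h𝒳.mem_toFinset] at hX'
  have hfib : {p ∈ flags 𝒳 | p.1 = X} = Prod.mk X '' X := by
    ext ⟨Y, y⟩
    simp only [flags, mem_ofPred_eq, mem_image, Prod.mk.injEq]
    constructor
    · rintro ⟨⟨-, hy⟩, rfl⟩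
      exact ⟨y, hy, rfl, rfl⟩
    · rintro ⟨y, hy, rfl, rfl⟩
      exact ⟨⟨hX', hy⟩, rfl⟩
  rw [hfib, (Prod.mk_right_injective X).injOn.ncard_image, (hX X hX').2]

lemma injOn_union_of_subset_of_disjoint {F : Set α} {𝒞 𝒥 : Set (Set α)}
    (h𝒞 : ∀ C ∈ 𝒞, C ⊆ F) (h𝒥 : ∀ J ∈ 𝒥, Disjoint J F) :
    InjOn (fun p : Set α × Set α => p.1 ∪ p.2) (𝒞 ×ˢ 𝒥) := by
  have hinter : ∀ C ∈ 𝒞, ∀ J ∈ 𝒥, (C ∪ J) ∩ F = C := fun C hC J hJ => by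
    rw [union_inter_distrib_right, inter_eq_left.2 (h𝒞 C hC), (h𝒥 J hJ).inter_eq, union_empty]
  have hsdiff : ∀ C ∈ 𝒞, ∀ J ∈ 𝒥, (C ∪ J) \ F = J := fun C hC J hJ => by
    rw [union_sdiff_distrib, sdiff_eq_empty.2 (h𝒞 C hC), (h𝒥 J hJ).sdiff_eq_left, empty_union]
  rintro ⟨C, J⟩ ⟨hC, hJ⟩ ⟨C', J'⟩ ⟨hC', hJ'⟩ (hCJ : C ∪ J = C' ∪ J')
  exact Prod.ext ((hinter C hC J hJ).symm.trans (hCJ ▸ hinter C' hC' J' hJ'))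
    ((hsdiff C hC J hJ).symm.trans (hCJ ▸ hsdiff C' hC' J' hJ'))

lemma choose_mul_eq_choose_sub_one_mul {n r : ℕ} (hr : 1 ≤ r) :
    n.choose r * r = n.choose (r - 1) * (n + 1 - r) := by
  obtain ⟨s, rfl⟩ : ∃ s, r = s + 1 := ⟨r - 1, by omega⟩
  rw [Nat.choose_succ_right_eq, Nat.add_sub_cancel, Nat.add_sub_add_right]

lemma le_choose_sub_two {m r : ℕ} (hr : 3 ≤ r) (hrm : r ≤ m) : r ≤ m.choose (r - 2) :=
  calc r ≤ r.choose 2 := by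
        rw [Nat.choose_two_right, Nat.le_div_iff_mul_le two_pos]
        exact Nat.mul_le_mul_left r (by omega)
    _ = r.choose (r - 2) := (Nat.choose_symm (by omega)).symm
    _ ≤ m.choose (r - 2) := Nat.choose_le_choose _ hrm

lemma cast_le_one_div_mul_choose {a n r : ℕ} (hr : 1 ≤ r) (hrn : r ≤ n)
    (h : r * a ≤ n.choose (r - 1)) : (a : ℝ) ≤ 1 / ((n : ℝ) - r + 1) * n.choose r := by
  have hnat : a * (n + 1 - r) ≤ n.choose r := by
    refine Nat.le_of_mul_le_mul_right ?_ hr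
    calc a * (n + 1 - r) * r = r * a * (n + 1 - r) := by ring
      _ ≤ n.choose (r - 1) * (n + 1 - r) := Nat.mul_le_mul_right _ h
      _ = n.choose r * r := (choose_mul_eq_choose_sub_one_mul hr).symm
  have hcast : ((n + 1 - r : ℕ) : ℝ) = (n : ℝ) - r + 1 := by
    rw [Nat.cast_sub (by omega)]
    push_cast
    ring
  have hpos : (0 : ℝ) < (n : ℝ) - r + 1 := by
    rw [← hcast]
    exact_mod_cast (by omega : 0 < n + 1 - r)
  rw [one_div_mul_eq_div, le_div_iff₀ hpos, ← hcast]
  exact_mod_cast hnat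

end Counting

section Rank

variable {M : Matroid α} {B I X F : Set α}

lemma _root_.Matroid.IsBase.ncard_eq_mrk_s7 (hB : M.IsBase B) : B.ncard = mrk M :=
  (IsGreatest.csSup_eq (s := {n | ∃ B, M.IsBase B ∧ B.ncard = n}) ⟨⟨B, hB, rfl⟩, by
    rintro _ ⟨B', hB', rfl⟩
    exact (hB'.ncard_eq_ncard_of_isBase hB).le⟩).symm

lemma _root_.Matroid.IsBasis.ncard_eq_mrnk (hE : M.E.Finite) (hI : M.IsBasis I X) :
    I.ncard = mrnk M X :=
  (IsGreatest.csSup_eq (s := {n | ∃ J, J ⊆ X ∧ M.Indep J ∧ J.ncard = n})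
    ⟨⟨I, hI.subset, hI.indep, rfl⟩, by
    rintro _ ⟨J, hJX, hJ, rfl⟩
    obtain ⟨J', hJ', hJJ'⟩ := hJ.subset_isBasis_of_subset hJX hI.subset_ground
    rw [ncard_def, ncard_def, ← hJ'.encard_eq_encard hI]
    exact ENat.toNat_le_toNat (encard_le_encard hJJ')
      (hE.subset hJ'.indep.subset_ground).encard_lt_top.ne⟩).symm

lemma _root_.Matroid.Indep.ncard_le_mrnk (hE : M.E.Finite) (hI : M.Indep I) (hIX : I ⊆ X)
    (hX : X ⊆ M.E) : I.ncard ≤ mrnk M X := by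
  obtain ⟨J, hJ, hIJ⟩ := hI.subset_isBasis_of_subset hIX hX
  rw [← hJ.ncard_eq_mrnk hE]
  exact ncard_le_ncard hIJ (hE.subset hJ.indep.subset_ground)

lemma _root_.Matroid.Indep.isBasis_of_ncard_eq_mrnk (hE : M.E.Finite) (hI : M.Indep I)
    (hIX : I ⊆ X) (hX : X ⊆ M.E) (h : I.ncard = mrnk M X) : M.IsBasis I X := by
  obtain ⟨J, hJ, hIJ⟩ := hI.subset_isBasis_of_subset hIX hX
  rwa [eq_of_subset_of_ncard_le hIJ (by rw [hJ.ncard_eq_mrnk hE, h])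
    (hE.subset hJ.indep.subset_ground)]

lemma _root_.Matroid.Indep.subset_sdiff_loops (hI : M.Indep I) : I ⊆ M.E \ M.loops :=
  subset_sdiff.2 ⟨hI.subset_ground, hI.disjoint_loops⟩

lemma mrk_le_ncard_sdiff_loops (hE : M.E.Finite) : mrk M ≤ (M.E \ M.loops).ncard := by
  obtain ⟨B, hB⟩ := M.exists_isBase
  rw [← hB.ncard_eq_mrk_s7]
  exact ncard_le_ncard hB.indep.subset_sdiff_loops hE.sdiff

lemma _root_.Matroid.IsFlat.eq_loops_of_mrnk_eq_zero (hE : M.E.Finite) (hF : M.IsFlat F)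
    (h : mrnk M F = 0) : F = M.loops := by
  refine subset_antisymm (fun e heF => ?_) hF.loops_subset
  by_contra he
  have hI : M.Indep {e} := indep_singleton.2 <|
    isNonloop_iff_mem_compl_loops.2 ⟨hF.subset_ground heF, he⟩
  have := hI.ncard_le_mrnk hE (singleton_subset_iff.2 heF) hF.subset_ground
  simp [h] at this

lemma _root_.Matroid.IsFlat.sdiff_nonempty_of_mrnk_lt (hE : M.E.Finite) (hF : M.IsFlat F)
    (h : mrnk M F < mrk M) : (M.E \ F).Nonempty := by
  rw [nonempty_iff_ne_empty, Ne, sdiff_eq_empty]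
  intro hEF
  obtain ⟨I, hI⟩ := M.exists_isBasis F hF.subset_ground
  have hIB : M.IsBase I := by
    rwa [subset_antisymm hF.subset_ground hEF, isBasis_ground_iff] at hI
  rw [← hI.ncard_eq_mrnk hE, hIB.ncard_eq_mrk_s7] at h
  exact lt_irrefl _ h

lemma _root_.Matroid.IsFlat.ncard_sdiff_loops_eq (hE : M.E.Finite) (hF : M.IsFlat F) :
    (M.E \ M.loops).ncard = (F \ M.loops).ncard + (M.E \ F).ncard := by
  rw [← ncard_union_eq (disjoint_of_subset_left sdiff_subset disjoint_sdiff_right)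
    (hE.subset (sdiff_subset.trans hF.subset_ground)) hE.sdiff]
  congr 1
  ext e
  have := hF.loops_subset (a := e)
  have := hF.subset_ground (a := e)
  simp only [Set.mem_sdiff, mem_union]
  tauto

end Rank

section IndepCounting

variable {M : Matroid α} {B I J F : Set α}

lemma ncard_sdiff_loops_add_one_le (hE : M.E.Finite) (hB : M.IsBase B) :
    (M.E \ M.loops).ncard + 1 ≤ {B' | M.IsBase B'}.ncard + B.ncard := by
  have hex : ∀ e ∈ (M.E \ M.loops) \ B, ∃ B', M.IsBase B' ∧ e ∈ B' ∧ B' ⊆ insert e B := by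
    rintro e ⟨he, -⟩
    obtain ⟨B', hB', h1, h2⟩ :=
      (isNonloop_iff_mem_compl_loops.2 he).indep.exists_isBase_subset_union_isBase hB
    exact ⟨B', hB', h1 rfl, by simpa using h2⟩
  choose! g hg using hex
  have hbases : {B' | M.IsBase B'}.Finite :=
    hE.finite_subsets.subset fun B' hB' => hB'.subset_ground
  have hinj : ((M.E \ M.loops) \ B).ncard ≤ ({B' | M.IsBase B'} \ {B}).ncard := by
    refine ncard_le_ncard_of_injOn g
      (fun e he => ⟨(hg e he).1, fun h => he.2 (h ▸ (hg e he).2.1)⟩) ?_ hbases.sdiff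
    intro e he e' he' hee'
    exact (((hg e he).2.2 (hee' ▸ (hg e' he').2.1)).resolve_right he'.2).symm
  have := ncard_sdiff_singleton_add_one (show B ∈ {B' | M.IsBase B'} from hB) hbases
  rw [← ncard_sdiff_add_ncard_of_subset hB.indep.subset_sdiff_loops hE.sdiff]
  omega

lemma ncard_sdiff_loops_le_ncard_indep (hE : M.E.Finite) (hB : M.IsBase B)
    (hB2 : 2 ≤ B.ncard) :
    (M.E \ M.loops).ncard ≤ {J | M.Indep J ∧ J.ncard + 1 = B.ncard}.ncard := by
  classical
  have hex : ∀ e ∈ (M.E \ M.loops) \ B,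
      ∃ J, M.Indep J ∧ J.ncard + 1 = B.ncard ∧ e ∈ J ∧ J ⊆ insert e B := by
    rintro e ⟨he, -⟩
    obtain ⟨B', hB', h1, h2⟩ :=
      (isNonloop_iff_mem_compl_loops.2 he).indep.exists_isBase_subset_union_isBase hB
    have hcard : B'.ncard = B.ncard := hB'.ncard_eq_ncard_of_isBase hB
    obtain ⟨z, hz, hze⟩ := exists_ne_of_one_lt_ncard (by omega : 1 < B'.ncard) e
    refine ⟨B' \ {z}, hB'.indep.subset sdiff_subset, ?_, ⟨h1 rfl, hze.symm⟩,
      sdiff_subset.trans (by simpa using h2)⟩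
    rw [ncard_sdiff_singleton_add_one hz (hE.subset hB'.subset_ground), hcard]
  choose! g hg using hex
  -- `B \ {e}` lies inside `B`, whereas `g e` leaves `B` exactly at `e`.
  refine ncard_le_ncard_of_injOn (fun e => if e ∈ B then B \ {e} else g e) ?_ ?_
    (hE.finite_subsets.subset fun J hJ => hJ.1.subset_ground)
  · intro e he
    by_cases heB : e ∈ B
    · simp only [if_pos heB]
      exact ⟨hB.indep.subset sdiff_subset,
        ncard_sdiff_singleton_add_one heB (hE.subset hB.subset_ground)⟩
    · simp only [if_neg heB]
      exact ⟨(hg e ⟨he, heB⟩).1, (hg e ⟨he, heB⟩).2.1⟩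
  · intro e he e' he' hee'
    by_cases heB : e ∈ B <;> by_cases he'B : e' ∈ B <;>
      simp only [heB, he'B, if_true, if_false] at hee'
    · by_contra hne
      have : e' ∈ B \ {e} := ⟨he'B, Ne.symm hne⟩
      rw [hee'] at this
      exact this.2 rfl
    · exact absurd ((hee' ▸ (hg e' ⟨he', he'B⟩).2.2.1 : e' ∈ B \ {e}).1) he'B
    · exact absurd ((hee' ▸ (hg e ⟨he, heB⟩).2.2.1 : e ∈ B \ {e'}).1) heB
    · exact (((hg e ⟨he, heB⟩).2.2.2 (hee' ▸ (hg e' ⟨he', he'B⟩).2.2.1)).resolve_right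
        he'B).symm

lemma _root_.Matroid.IsBasis.contract_indep_of_contract_indep (hI : M.IsBasis I F)
    (hJ : (M ／ I).Indep J) : (M ／ F).Indep J := by
  rw [hI.contract_eq_contract_delete, delete_indep_iff]
  exact ⟨hJ, hJ.disjoint_loops.mono_right hI.sdiff_subset_loops_contract⟩

lemma _root_.Matroid.IsBasis.contract_ground_sdiff_loops (hF : M.IsFlat F)
    (hI : M.IsBasis I F) : (M ／ I).E \ (M ／ I).loops = M.E \ F := by
  rw [contract_ground, contract_loops_eq, hI.closure_eq_closure, hF.closure]
  ext e
  have := hI.subset (a := e)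
  simp only [Set.mem_sdiff]
  tauto

lemma ncard_sdiff_le_ncard_contract_indep (hE : M.E.Finite) (hF : M.IsFlat F)
    (hkr : mrnk M F + 2 ≤ mrk M) :
    (M.E \ F).ncard ≤ {J | (M ／ F).Indep J ∧ J.ncard + mrnk M F + 1 = mrk M}.ncard := by
  obtain ⟨I, hI⟩ := M.exists_isBasis F hF.subset_ground
  obtain ⟨B, hB, hIB⟩ := hI.indep.exists_isBase_superset
  have hBI : (M ／ I).IsBase (B \ I) :=
    hI.indep.contract_isBase_iff.2 ⟨by rwa [sdiff_union_of_subset hIB], disjoint_sdiff_left⟩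
  have hcard : (B \ I).ncard + mrnk M F = mrk M := by
    rw [← hI.ncard_eq_mrnk hE, ← hB.ncard_eq_mrk_s7,
      ncard_sdiff_add_ncard_of_subset hIB (hE.subset hB.subset_ground)]
  calc (M.E \ F).ncard = ((M ／ I).E \ (M ／ I).loops).ncard := by
        rw [hI.contract_ground_sdiff_loops hF]
    _ ≤ {J | (M ／ I).Indep J ∧ J.ncard + 1 = (B \ I).ncard}.ncard :=
        ncard_sdiff_loops_le_ncard_indep hE.sdiff hBI (by omega)
    _ ≤ _ := by
        refine ncard_le_ncard (fun J hJ => ?_) (hE.finite_subsets.subset fun J hJ => ?_)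
        · have := hJ.2
          exact ⟨hI.contract_indep_of_contract_indep hJ.1, by omega⟩
        · exact hJ.1.subset_ground.trans sdiff_subset

end IndepCounting

section Erection

/-- `N` is a nontrivial erection of the restriction of `M` to the flat `F`. -/
structure IsFlatErection (M N : Matroid α) (F : Set α) : Prop where
  isFlat : M.IsFlat F
  ground_eq : N.E = F
  mrk_eq : mrk N = mrnk M F + 1
  isTruncationOf : IsTruncationOf (M ↾ F) N

variable {M N : Matroid α} {F C : Set α} {x : α}

lemma IsEssentialFlat.exists_isFlatErection (h : IsEssentialFlat M F) :
    ∃ N, IsFlatErection M N F :=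
  let ⟨hF, N, hNE, hN, hT⟩ := h
  ⟨N, hF, hNE, hN, hT⟩

namespace IsFlatErection

lemma indep_iff (h : IsFlatErection M N F) {I : Set α} :
    N.Indep I ∧ I.ncard ≤ mrnk M F ↔ M.Indep I ∧ I ⊆ F := by
  rw [← restrict_indep_iff, h.isTruncationOf.2, h.mrk_eq, Nat.add_le_add_iff_right]

lemma ncard_of_isBase (h : IsFlatErection M N F) (hC : N.IsBase C) :
    C.ncard = mrnk M F + 1 := by
  rw [hC.ncard_eq_mrk_s7, h.mrk_eq]

lemma subset_of_isBase (h : IsFlatErection M N F) (hC : N.IsBase C) : C ⊆ F :=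
  h.ground_eq ▸ hC.subset_ground

lemma finite_setOf_isBase (hE : M.E.Finite) (h : IsFlatErection M N F) :
    {C | N.IsBase C}.Finite :=
  (hE.subset h.isFlat.subset_ground).finite_subsets.subset fun _ hC => h.subset_of_isBase hC

lemma nonempty (h : IsFlatErection M N F) : F.Nonempty := by
  obtain ⟨C, hC⟩ := N.exists_isBase
  exact (nonempty_of_ncard_ne_zero (by rw [h.ncard_of_isBase hC]; omega)).mono
    (h.subset_of_isBase hC)

lemma isCircuit_of_isBase (hE : M.E.Finite) (h : IsFlatErection M N F) (hC : N.IsBase C) :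
    M.IsCircuit C := by
  have hCF := h.subset_of_isBase hC
  refine isCircuit_iff_dep_forall_sdiff_singleton_indep.2
    ⟨⟨fun hCi => ?_, hCF.trans h.isFlat.subset_ground⟩, fun x hx => ?_⟩
  · have := hCi.ncard_le_mrnk hE hCF h.isFlat.subset_ground
    rw [h.ncard_of_isBase hC] at this
    omega
  · refine (h.indep_iff.1 ⟨hC.indep.subset sdiff_subset, ?_⟩).1
    rw [ncard_sdiff_singleton_of_mem hx, h.ncard_of_isBase hC]
    omega

lemma isBasis_sdiff_singleton (hE : M.E.Finite) (h : IsFlatErection M N F) (hC : N.IsBase C)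
    (hx : x ∈ C) : M.IsBasis (C \ {x}) F := by
  refine ((h.isCircuit_of_isBase hE hC).sdiff_singleton_indep hx).isBasis_of_ncard_eq_mrnk hE
    (sdiff_subset.trans (h.subset_of_isBase hC)) h.isFlat.subset_ground ?_
  rw [ncard_sdiff_singleton_of_mem hx, h.ncard_of_isBase hC, Nat.add_sub_cancel]

lemma closure_of_isBase (hE : M.E.Finite) (h : IsFlatErection M N F) (hC : N.IsBase C) :
    M.closure C = F := by
  obtain ⟨x, hx⟩ := (h.isCircuit_of_isBase hE hC).nonempty
  rw [← (h.isCircuit_of_isBase hE hC).closure_sdiff_singleton_eq x,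
    (h.isBasis_sdiff_singleton hE hC hx).closure_eq_closure, h.isFlat.closure]

lemma sdiff_loops_subset (h : IsFlatErection M N F) : F \ M.loops ⊆ N.E \ N.loops := by
  rintro e ⟨heF, he⟩
  have hMe : M.Indep {e} :=
    indep_singleton.2 (isNonloop_iff_mem_compl_loops.2 ⟨h.isFlat.subset_ground heF, he⟩)
  have hNe := (h.indep_iff.2 ⟨hMe, singleton_subset_iff.2 heF⟩).1
  exact isNonloop_iff_mem_compl_loops.1 (indep_singleton.1 hNe)

lemma ncard_sdiff_loops_le (hE : M.E.Finite) (h : IsFlatErection M N F) :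
    (F \ M.loops).ncard ≤ {C | N.IsBase C}.ncard + mrnk M F := by
  obtain ⟨B, hB⟩ := N.exists_isBase
  have hNE : N.E.Finite := h.ground_eq ▸ hE.subset h.isFlat.subset_ground
  have h1 := ncard_sdiff_loops_add_one_le hNE hB
  have h2 := ncard_le_ncard h.sdiff_loops_subset hNE.sdiff
  rw [h.ncard_of_isBase hB] at h1
  omega

end IsFlatErection

end Erection

section MarkedSets

variable {M N : Matroid α} {F C J : Set α} {x y : α}

open Classical in
noncomputable def markedFlat (M : Matroid α) (p : Set α × α) : Set α :=
  if M.Indep p.1 then M.closure (p.1 \ {p.2}) else M.closure {x ∈ p.1 | M.Indep (p.1 \ {x})}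

def markedNonloopSets (M : Matroid α) (r : ℕ) : Set (Set α × α) :=
  flags {X | X ⊆ M.E \ M.loops ∧ X.ncard = r}

def chargedSets (M : Matroid α) (r : ℕ) (F : Set α) : Set (Set α × α) :=
  {p ∈ markedNonloopSets M r | markedFlat M p = F}

lemma finite_markedNonloopSets (hE : M.E.Finite) (r : ℕ) : (markedNonloopSets M r).Finite :=
  finite_flags (hE.sdiff.finite_subsets.subset fun _ hX => hX.1)
    fun _ hX => hE.sdiff.subset hX.1

lemma finite_chargedSets (hE : M.E.Finite) (r : ℕ) (F : Set α) : (chargedSets M r F).Finite :=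
  (finite_markedNonloopSets hE r).subset fun _ hp => hp.1

lemma ncard_markedNonloopSets (hE : M.E.Finite) (r : ℕ) :
    (markedNonloopSets M r).ncard = (M.E \ M.loops).ncard.choose r * r := by
  rw [markedNonloopSets, ncard_flags (hE.sdiff.finite_subsets.subset fun _ hX => hX.1)
    fun _ hX => ⟨hE.sdiff.subset hX.1, hX.2⟩, ncard_powerset_ncard hE.sdiff]

namespace IsFlatErection

lemma markedFlat_union (hE : M.E.Finite) (h : IsFlatErection M N F) (hC : N.IsBase C)
    (hJ : (M ／ F).Indep J) (y : α) : markedFlat M (C ∪ J, y) = F := by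
  have hCc := h.isCircuit_of_isBase hE hC
  have hCF := h.subset_of_isBase hC
  have hJF : Disjoint J F := (subset_sdiff.1 hJ.subset_ground).2
  have hsupport : {z ∈ C ∪ J | M.Indep ((C ∪ J) \ {z})} = C := by
    ext z
    refine ⟨fun ⟨hz, hind⟩ => hz.resolve_right fun hzJ => hCc.not_indep (hind.subset ?_),
      fun hz => ⟨Or.inl hz, ?_⟩⟩
    · exact fun c hc => ⟨Or.inl hc, fun hcz => hJF.notMem_of_mem_left (hcz ▸ hzJ) (hCF hc)⟩
    · have hzJ : z ∉ J := fun hzJ => hJF.notMem_of_mem_left hzJ (hCF hz)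
      rw [union_sdiff_distrib, sdiff_singleton_eq_self hzJ, union_comm]
      exact ((h.isBasis_sdiff_singleton hE hC hz).contract_indep_iff.1 hJ).1
  rw [markedFlat, if_neg fun hi => hCc.not_indep (hi.subset subset_union_left), hsupport,
    h.closure_of_isBase hE hC]

lemma ncard_union (hE : M.E.Finite) (h : IsFlatErection M N F) (hC : N.IsBase C)
    (hJ : (M ／ F).Indep J) : (C ∪ J).ncard = C.ncard + J.ncard :=
  ncard_union_eq (disjoint_of_subset_left (h.subset_of_isBase hC)
    (subset_sdiff.1 hJ.subset_ground).2.symm)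
    (hE.subset ((h.subset_of_isBase hC).trans h.isFlat.subset_ground))
    (hE.subset (hJ.subset_ground.trans sdiff_subset))

lemma union_mem_chargedSets (hE : M.E.Finite) (h : IsFlatErection M N F) (hk : 1 ≤ mrnk M F)
    (hC : N.IsBase C) (hJ : (M ／ F).Indep J) (hy : y ∈ C ∪ J) :
    (C ∪ J, y) ∈ chargedSets M (C.ncard + J.ncard) F \ {p | M.Indep p.1} := by
  have hCc := h.isCircuit_of_isBase hE hC
  have hnt : C.Nontrivial := (one_lt_ncard_iff_nontrivial_and_finite.1
    (by rw [h.ncard_of_isBase hC]; omega)).1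
  have hnl : C ∪ J ⊆ M.E \ M.loops := union_subset
    (fun c hc => isNonloop_iff_mem_compl_loops.1 (hCc.isNonloop_of_mem hnt hc))
    hJ.of_contract.subset_sdiff_loops
  exact ⟨⟨⟨⟨hnl, h.ncard_union hE hC hJ⟩, hy⟩, h.markedFlat_union hE hC hJ y⟩,
    fun hi => hCc.not_indep (hi.subset subset_union_left)⟩

lemma insert_mem_chargedSets (hE : M.E.Finite) (h : IsFlatErection M N F) (hC : N.IsBase C)
    (hx : x ∈ C) (hy : y ∈ M.E \ F) :
    (insert y (C \ {x}), y) ∈ chargedSets M (mrnk M F + 1) F ∩ {p | M.Indep p.1} := by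
  have hI := h.isBasis_sdiff_singleton hE hC hx
  have hyC : y ∉ C \ {x} := fun hyC => hy.2 (hI.subset hyC)
  have hind : M.Indep (insert y (C \ {x})) := by
    refine hI.indep.insert_indep_iff.2 (Or.inl ?_)
    rwa [hI.closure_eq_closure, h.isFlat.closure]
  refine ⟨⟨⟨⟨hind.subset_sdiff_loops, ?_⟩, mem_insert _ _⟩, ?_⟩, hind⟩
  · rw [ncard_insert_of_notMem hyC (hE.subset hI.indep.subset_ground),
      ← hI.ncard_eq_mrnk hE]
  · simp only [markedFlat, if_pos hind, insert_sdiff_self_of_notMem hyC]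
    rw [hI.closure_eq_closure, h.isFlat.closure]

lemma le_ncard_chargedSets_dep (hE : M.E.Finite) (h : IsFlatErection M N F)
    (hk : 1 ≤ mrnk M F) {𝒥 : Set (Set α)} {r : ℕ}
    (h𝒥 : ∀ J ∈ 𝒥, (M ／ F).Indep J ∧ J.ncard + mrnk M F + 1 = r) :
    {C | N.IsBase C}.ncard * 𝒥.ncard * r ≤ (chargedSets M r F \ {p | M.Indep p.1}).ncard := by
  have h𝒞 : ∀ C ∈ {C | N.IsBase C}, C ⊆ F := fun _ hC => h.subset_of_isBase hC
  have hJF : ∀ J ∈ 𝒥, J ⊆ M.E \ F := fun J hJ => (h𝒥 J hJ).1.subset_ground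
  have hcard : ∀ C ∈ {C | N.IsBase C}, ∀ J ∈ 𝒥, C.ncard + J.ncard = r := fun C hC J hJ => by
    rw [h.ncard_of_isBase hC, ← (h𝒥 J hJ).2]
    ring
  have hinj := injOn_union_of_subset_of_disjoint h𝒞 fun J hJ => (subset_sdiff.1 (hJF J hJ)).2
  have hfin : ({C | N.IsBase C} ×ˢ 𝒥).Finite :=
    (h.finite_setOf_isBase hE).prod
      (hE.finite_subsets.subset fun J hJ => (hJF J hJ).trans sdiff_subset)
  calc {C | N.IsBase C}.ncard * 𝒥.ncard * r
      = (flags ((fun p : Set α × Set α => p.1 ∪ p.2) '' ({C | N.IsBase C} ×ˢ 𝒥))).ncard := by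
        rw [ncard_flags (hfin.image _), hinj.ncard_image, ncard_prod]
        rintro _ ⟨⟨C, J⟩, ⟨hC, hJ⟩, rfl⟩
        exact ⟨hE.subset (union_subset ((h𝒞 C hC).trans h.isFlat.subset_ground)
          ((hJF J hJ).trans sdiff_subset)), hcard C hC J hJ ▸ h.ncard_union hE hC (h𝒥 J hJ).1⟩
    _ ≤ _ := by
        refine ncard_le_ncard ?_ ((finite_chargedSets hE r F).subset sdiff_subset)
        rintro ⟨_, y⟩ ⟨⟨⟨C, J⟩, ⟨hC, hJ⟩, rfl⟩, hy⟩
        exact hcard C hC J hJ ▸ h.union_mem_chargedSets hE hk hC (h𝒥 J hJ).1 hy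

lemma le_ncard_chargedSets_indep (hE : M.E.Finite) (h : IsFlatErection M N F) {r : ℕ}
    (hr : mrnk M F + 1 = r) :
    r * (M.E \ F).ncard ≤ (chargedSets M r F ∩ {p | M.Indep p.1}).ncard := by
  obtain ⟨C, hC⟩ := N.exists_isBase
  have hinj : InjOn (fun p : α × α => (insert p.2 (C \ {p.1}), p.2)) (C ×ˢ (M.E \ F)) := by
    rintro ⟨x, y⟩ ⟨hx, hy⟩ ⟨x', y'⟩ ⟨hx', hy'⟩ hxy
    simp only [Prod.mk.injEq] at hxy
    obtain ⟨hXX', rfl⟩ := hxy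
    have hyC : ∀ x ∈ C, y ∉ C \ {x} := fun x hx hyC =>
      hy.2 ((h.isBasis_sdiff_singleton hE hC hx).subset hyC)
    have hCC := congrArg (· \ {y}) hXX'
    simp only [insert_sdiff_self_of_notMem (hyC x hx),
      insert_sdiff_self_of_notMem (hyC x' hx')] at hCC
    by_contra hne
    have : x' ∈ C \ {x} := ⟨hx', fun h' => hne (Prod.ext h'.symm rfl)⟩
    rw [hCC] at this
    exact this.2 rfl
  calc r * (M.E \ F).ncard
      = ((fun p : α × α => (insert p.2 (C \ {p.1}), p.2)) '' (C ×ˢ (M.E \ F))).ncard := by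
        rw [hinj.ncard_image, ncard_prod, h.ncard_of_isBase hC, hr]
    _ ≤ _ := by
        refine ncard_le_ncard ?_ ((finite_chargedSets hE r F).subset inter_subset_left)
        rintro _ ⟨⟨x, y⟩, ⟨hx, hy⟩, rfl⟩
        exact hr ▸ h.insert_mem_chargedSets hE hC hx hy

lemma le_ncard_chargedSets (hE : M.E.Finite) (h : IsFlatErection M N F)
    (hk : 1 ≤ mrnk M F) (hkr : mrnk M F < mrk M) :
    mrk M * ((M.E \ M.loops).ncard + 1 - mrk M) ≤ (chargedSets M (mrk M) F).ncard := by
  have hn' := h.isFlat.ncard_sdiff_loops_eq hE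
  have hA := h.ncard_sdiff_loops_le hE
  rcases (show mrnk M F + 1 = mrk M ∨ mrnk M F + 2 ≤ mrk M by omega) with hr | hr
  -- For a hyperplane the circuits alone are too few; independent marked sets make up the rest.
  · have hdep := h.le_ncard_chargedSets_dep hE hk (𝒥 := {∅}) fun J hJ => by
      rw [mem_singleton_iff.1 hJ, ncard_empty, zero_add]
      exact ⟨Matroid.empty_indep _, hr⟩
    rw [ncard_singleton, mul_one] at hdep
    calc mrk M * ((M.E \ M.loops).ncard + 1 - mrk M)
        ≤ mrk M * ({C | N.IsBase C}.ncard + (M.E \ F).ncard) :=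
          Nat.mul_le_mul_left _ (by omega)
      _ = {C | N.IsBase C}.ncard * mrk M + mrk M * (M.E \ F).ncard := by ring
      _ ≤ _ + _ := add_le_add hdep (h.le_ncard_chargedSets_indep hE hr)
      _ = _ := by
          rw [add_comm, ncard_inter_add_ncard_sdiff_eq_ncard _ _ (finite_chargedSets hE _ F)]
  · have hJ := ncard_sdiff_le_ncard_contract_indep hE h.isFlat hr
    have hm := (ncard_pos hE.sdiff).2 (h.isFlat.sdiff_nonempty_of_mrnk_lt hE hkr)
    have hC : 0 < {C | N.IsBase C}.ncard :=
      (ncard_pos (h.finite_setOf_isBase hE)).2 N.exists_isBase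
    have hadd : ∀ a b : ℕ, 0 < a → 0 < b → a + b ≤ a * b + 1 := fun a b ha hb => by nlinarith
    have hCJ := hadd _ _ hC (hm.trans_le hJ)
    calc mrk M * ((M.E \ M.loops).ncard + 1 - mrk M)
        ≤ mrk M * ({C | N.IsBase C}.ncard *
          {J | (M ／ F).Indep J ∧ J.ncard + mrnk M F + 1 = mrk M}.ncard) :=
          Nat.mul_le_mul_left _ (by omega)
      _ = _ * _ * mrk M := mul_comm _ _
      _ ≤ _ := (h.le_ncard_chargedSets_dep hE hk fun J hJ => hJ).trans
          (ncard_le_ncard sdiff_subset (finite_chargedSets hE _ F))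

end IsFlatErection

end MarkedSets

variable {M : Matroid α}

lemma mul_ncard_essentialFlats_pos_le_choose (hE : M.E.Finite) :
    mrk M * {F | IsEssentialFlat M F ∧ 1 ≤ mrnk M F ∧ mrnk M F < mrk M}.ncard ≤
      (M.E \ M.loops).ncard.choose (mrk M - 1) := by
  have hrn := mrk_le_ncard_sdiff_loops hE
  rcases Nat.eq_zero_or_pos (mrk M) with hr | hr
  · simp [hr]
  have hfib := ncard_mul_le_ncard_of_le_ncard_fiber (finite_markedNonloopSets hE (mrk M))
    (markedFlat M) (t := {F | IsEssentialFlat M F ∧ 1 ≤ mrnk M F ∧ mrnk M F < mrk M})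
    fun F ⟨hF, hk, hkr⟩ =>
      let ⟨_, hN⟩ := hF.exists_isFlatErection
      hN.le_ncard_chargedSets hE hk hkr
  rw [ncard_markedNonloopSets hE, choose_mul_eq_choose_sub_one_mul hr] at hfib
  refine Nat.le_of_mul_le_mul_right ?_ (by omega : 0 < (M.E \ M.loops).ncard + 1 - mrk M)
  calc _ = _ * (mrk M * ((M.E \ M.loops).ncard + 1 - mrk M)) := by ring
    _ ≤ _ := hfib

lemma mul_ncard_essentialFlats_le_choose (hE : M.E.Finite) (hr : 3 ≤ mrk M) :
    mrk M * {F | IsEssentialFlat M F ∧ mrnk M F < mrk M}.ncard ≤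
      M.E.ncard.choose (mrk M - 1) := by
  set Ess := {F | IsEssentialFlat M F ∧ mrnk M F < mrk M}
  set Ess₁ := {F | IsEssentialFlat M F ∧ 1 ≤ mrnk M F ∧ mrnk M F < mrk M}
  have hEss : Ess ⊆ insert M.loops Ess₁ := by
    rintro F ⟨hF, hFr⟩
    rcases Nat.eq_zero_or_pos (mrnk M F) with h0 | h0
    · exact Or.inl (hF.1.eq_loops_of_mrnk_eq_zero hE h0)
    · exact Or.inr ⟨hF, h0, hFr⟩
  have hEss₁ : Ess₁.Finite := hE.finite_subsets.subset fun F hF => hF.1.1.subset_ground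
  have hpos := mul_ncard_essentialFlats_pos_le_choose hE
  have hrn := mrk_le_ncard_sdiff_loops hE
  rcases M.loops.eq_empty_or_nonempty with hL | hL
  · have hsub : Ess ⊆ Ess₁ := fun F hF =>
      (hEss hF).resolve_left fun hFL =>
        let ⟨_, hN⟩ := hF.1.exists_isFlatErection
        hN.nonempty.ne_empty (hFL.trans hL)
    rw [hL, sdiff_empty] at hpos
    exact (Nat.mul_le_mul_left _ (ncard_le_ncard hsub hEss₁)).trans hpos
  · have hn := ncard_sdiff_add_ncard_of_subset M.loops_subset_ground hE
    have hL1 := (ncard_pos (hE.subset M.loops_subset_ground)).2 hL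
    obtain ⟨m, hm⟩ : ∃ m, M.E.ncard = m + 1 := ⟨M.E.ncard - 1, by omega⟩
    obtain ⟨j, hj⟩ : ∃ j, mrk M - 1 = j + 1 := ⟨mrk M - 2, by omega⟩
    calc mrk M * Ess.ncard ≤ mrk M * (Ess₁.ncard + 1) :=
          Nat.mul_le_mul_left _ ((ncard_le_ncard hEss (hEss₁.insert _)).trans
            (ncard_insert_le _ _))
      _ = mrk M * Ess₁.ncard + mrk M := by ring
      _ ≤ m.choose (j + 1) + m.choose j := by
          rw [← hj]
          refine add_le_add (hpos.trans (Nat.choose_le_choose _ (by omega))) ?_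
          rw [show j = mrk M - 2 by omega]
          exact le_choose_sub_two hr (by omega)
      _ = M.E.ncard.choose (mrk M - 1) := by rw [hm, hj, Nat.choose_succ_succ', add_comm]

end PavingEnum

theorem essential_flats_bound_general {α : Type*} (M : Matroid α) (n r : ℕ)
    (hE : M.E.Finite) (hn : M.E.ncard = n) (hrk : mrk M = r)
    (hr : 3 ≤ r) :
    ({F : Set α | IsEssentialFlat M F ∧ mrnk M F < r}.ncard : ℝ) ≤
      (1 / ((n : ℝ) - r + 1)) * (n.choose r : ℝ) := by
  subst hn hrk
  exact cast_le_one_div_mul_choose (by omega)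
    ((mrk_le_ncard_sdiff_loops hE).trans (ncard_le_ncard sdiff_subset hE))
    (mul_ncard_essentialFlats_le_choose hE hr)

/-- For r ≥ 3 and n ≥ 2r, a matroid of rank r on n elements has at most
(1/(n−r+1))·C(n,r) essential flats of rank less than r. -/
theorem essential_flats_bound {α : Type*} (M : Matroid α) (n r : ℕ)
    (hE : M.E.Finite) (hn : M.E.ncard = n) (hrk : mrk M = r)
    (hr : 3 ≤ r) (h2r : 2 * r ≤ n) :
    ({F : Set α | IsEssentialFlat M F ∧ mrnk M F < r}.ncard : ℝ) ≤
      (1 / ((n : ℝ) - r + 1)) * (n.choose r : ℝ) :=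
  essential_flats_bound_general M n r hE hn hrk hr
end

section
/- For all natural numbers n and all r ≥ 1, m(n,r) ≤ m(n,r−1) · p(n,r). -/
open Matroid Set Filter Real

open PavingEnum

/-!
A matroid `M` of rank `r ≥ 1` is determined by its hyperplanes, the closures of its independent
`(r - 1)`-sets. Closures of sets of rank below `r - 1` can be computed in the truncation `T` of `M`
to rank `r - 1`, so each hyperplane `H` has a generating set `D(H) ⊆ H`, chosen greedily along a
linear order of the ground set, that spans `H` modulo those small closures and depends only on `T`
and `H`. Every `(r - 1)`-subset of `D(H)` is independent and spans `H`, so two distinct sets `D(H)`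
share fewer than `r - 1` elements: they are the blocks of a paving matroid of rank `r`, which
remembers every block with at least `r` elements. Now let `M₁`, `M₂` have the same truncation and
the same paving matroid, and let `K` be a largest hyperplane of `M₂` that is not one of `M₁`. Then
`D(K)` is not a block of `M₁`, so it has fewer than `r`, hence exactly `r - 1`, elements; it is
independent in both matroids and its `M₁`-closure is a hyperplane of `M₁` strictly containing `K`
that is not a hyperplane of `M₂`, contradicting the choice of `K`. Hence `M ↦ (T, paving matroid)`
is injective.
-/
namespace Set

lemma eq_of_forall_mem_sdiff_exists_ssuperset {α : Type*} [Finite α] {A B : Set (Set α)}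
    (hAB : ∀ K ∈ A \ B, ∃ H ∈ B \ A, K ⊂ H) (hBA : ∀ K ∈ B \ A, ∃ H ∈ A \ B, K ⊂ H) : A = B := by
  have hstep : ∀ K ∈ symmDiff A B, ∃ H ∈ symmDiff A B, K ⊂ H := by
    rintro K (hK | hK)
    · obtain ⟨H, hH, hKH⟩ := hAB K hK
      exact ⟨H, Or.inr hH, hKH⟩
    · obtain ⟨H, hH, hKH⟩ := hBA K hK
      exact ⟨H, Or.inl hH, hKH⟩
  by_contra hne
  obtain ⟨K, hK, hmax⟩ := exists_max_image (symmDiff A B) ncard (toFinite _)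
    (nonempty_iff_ne_empty.2 fun h => hne (symmDiff_eq_bot.1 h))
  obtain ⟨H, hH, hKH⟩ := hstep K hK
  exact (ncard_lt_ncard hKH).not_ge (hmax H hH)

end Set

namespace Matroid

variable {α : Type*}

instance [Finite α] : Finite (Matroid α) :=
  Finite.of_injective (fun M : Matroid α => (M.E, M.Indep))
    fun _ _ h => by
      simp only [Prod.mk.injEq] at h
      exact ext_indep h.1 fun _ _ => by rw [h.2]

lemma IsBase.mrk_eq {M : Matroid α} {B : Set α} (hB : M.IsBase B) : mrk M = B.ncard := by
  have : {k | ∃ B, M.IsBase B ∧ B.ncard = k} = {B.ncard} := by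
    ext k
    exact ⟨fun ⟨B', hB', hk⟩ => hk ▸ hB'.ncard_eq_ncard_of_isBase hB, fun hk => ⟨B, hB, hk.symm⟩⟩
  rw [mrk, this, csSup_singleton]

section Rank

variable [Finite α] {M : Matroid α} {B I X : Set α}

lemma Indep.ncard_le_mrk (hI : M.Indep I) : I.ncard ≤ mrk M := by
  obtain ⟨B, hB, hIB⟩ := hI.exists_isBase_superset
  exact hB.mrk_eq ▸ ncard_le_ncard hIB

lemma Indep.isBase_of_mrk_le (hI : M.Indep I) (h : mrk M ≤ I.ncard) : M.IsBase I := by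
  obtain ⟨B, hB, hIB⟩ := hI.exists_isBase_superset
  rwa [eq_of_subset_of_ncard_le hIB (hB.mrk_eq ▸ h)]

lemma Spanning.mrk_le_ncard (hX : M.Spanning X) : mrk M ≤ X.ncard := by
  obtain ⟨B, hB, hBX⟩ := hX.exists_isBase_subset
  exact hB.mrk_eq ▸ ncard_le_ncard hBX

lemma Indep.ncard_le_of_subset_closure (hI : M.Indep I) (hIX : I ⊆ M.closure X) :
    I.ncard ≤ X.ncard := by
  have : I.encard ≤ X.encard := calc
    I.encard = M.eRk I := hI.eRk_eq_encard.symm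
    _ ≤ M.eRk (M.closure X) := M.eRk_mono hIX
    _ = M.eRk X := M.eRk_closure_eq X
    _ ≤ X.encard := M.eRk_le_encard X
  rw [← I.toFinite.cast_ncard_eq, ← X.toFinite.cast_ncard_eq] at this
  exact_mod_cast this

lemma Indep.closure_eq_of_subset_closure_s8 (hI : M.Indep I) (hB : M.Indep B)
    (hIB : I ⊆ M.closure B) (hcard : B.ncard ≤ I.ncard) : M.closure I = M.closure B := by
  have hrk : M.eRk (M.closure B) ≤ M.eRk I := by
    rw [eRk_closure_eq, hB.eRk_eq_encard, hI.eRk_eq_encard, ← I.toFinite.cast_ncard_eq,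
      ← B.toFinite.cast_ncard_eq]
    exact_mod_cast hcard
  rw [(M.isRkFinite_of_finite I.toFinite).closure_eq_closure_of_subset_of_eRk_ge_eRk hIB hrk,
    closure_closure]

end Rank

section Truncate

variable [Finite α] {M : Matroid α} {k : ℕ} {I S : Set α}

noncomputable def truncate (M : Matroid α) (k : ℕ) : Matroid α :=
  (IndepMatroid.ofFinite M.E.toFinite (fun I => M.Indep I ∧ I.ncard ≤ k) ⟨M.empty_indep, by simp⟩
    (fun _ _ hJ hIJ => ⟨hJ.1.subset hIJ, (ncard_le_ncard hIJ).trans hJ.2⟩)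
    (fun I J hI hJ hlt => by
      obtain ⟨e, he, hins⟩ := hI.1.augment hJ.1 (by
        rwa [← I.toFinite.cast_ncard_eq, ← J.toFinite.cast_ncard_eq, Nat.cast_lt])
      refine ⟨e, he.1, he.2, hins, ?_⟩
      rw [ncard_insert_of_notMem he.2]
      omega)
    (fun _ hI => hI.1.subset_ground)).matroid

@[simp] lemma truncate_ground : (M.truncate k).E = M.E := rfl

@[simp] lemma truncate_indep_iff : (M.truncate k).Indep I ↔ M.Indep I ∧ I.ncard ≤ k := by
  simp [truncate]

lemma Indep.isBase_truncate (hI : M.Indep I) (hk : I.ncard = k) : (M.truncate k).IsBase I := by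
  obtain ⟨B, hB, hIB⟩ := (truncate_indep_iff.2 ⟨hI, hk.le⟩).exists_isBase_superset
  rwa [eq_of_subset_of_ncard_le hIB (hk ▸ (truncate_indep_iff.1 hB.indep).2)]

lemma mrk_truncate (hk : k ≤ mrk M) : mrk (M.truncate k) = k := by
  obtain ⟨B₀, hB₀⟩ := M.exists_isBase
  obtain ⟨B, hBB₀, hB⟩ := exists_subset_card_eq (hB₀.mrk_eq ▸ hk)
  rw [((hB₀.indep.subset hBB₀).isBase_truncate hB).mrk_eq, hB]

lemma closure_truncate_subset (hS : ¬ (M.truncate k).Spanning S) (hSE : S ⊆ M.E) :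
    (M.truncate k).closure S ⊆ M.closure S := by
  obtain ⟨I, hI⟩ := (M.truncate k).exists_isBasis S hSE
  obtain ⟨hIM, hIk⟩ := truncate_indep_iff.1 hI.indep
  have hIlt : I.ncard < k := hIk.lt_of_ne fun h =>
    hS ((hIM.isBase_truncate h).spanning_of_superset hI.subset hSE)
  rw [← hI.closure_eq_closure]
  refine fun x hx =>
    M.closure_subset_closure hI.subset (hIM.mem_closure_iff'.2 ⟨?_, fun hins => ?_⟩)
  · exact (hI.indep.mem_closure_iff'.1 hx).1
  · refine (hI.indep.mem_closure_iff'.1 hx).2 (truncate_indep_iff.2 ⟨hins, ?_⟩)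
    have := ncard_insert_le x I
    omega

end Truncate

section NonspanningClosure

variable {T : Matroid α} {H S Y : Set α}

/-- For the truncation `T` of `M` to rank `r - 1`, the non-spanning sets of `T` are the sets of
`M`-rank below `r - 1`, and `T.closure` agrees with `M.closure` on them. -/
def nonspanningClosure (T : Matroid α) : ClosureOperator (Set α) :=
  .ofCompletePred (fun Y => ∀ S ⊆ Y, ¬ T.Spanning S → T.closure S ⊆ Y)
    fun _ hYs S hS hSp =>
      subset_sInter fun Y hY => hYs Y hY S (hS.trans (sInter_subset_of_mem hY)) hSp

lemma isClosed_nonspanningClosure_iff :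
    T.nonspanningClosure.IsClosed Y ↔ ∀ S ⊆ Y, ¬ T.Spanning S → T.closure S ⊆ Y :=
  Iff.rfl

lemma isClosed_nonspanningClosure_truncate_closure [Finite α] (M : Matroid α) (k : ℕ)
    (X : Set α) : (M.truncate k).nonspanningClosure.IsClosed (M.closure X) :=
  isClosed_nonspanningClosure_iff.2 fun _ hS hSp =>
    (closure_truncate_subset hSp (hS.trans (M.closure_subset_ground X))).trans
      (M.closure_closure X ▸ M.closure_subset_closure hS)

variable [LinearOrder α]

def greedyGenerators (T : Matroid α) (H : Set α) : Set α :=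
  {x ∈ H | x ∉ T.nonspanningClosure {y ∈ H | y < x}}

lemma greedyGenerators_subset : T.greedyGenerators H ⊆ H := fun _ hx => hx.1

lemma nonspanningClosure_greedyGenerators [WellFoundedLT α]
    (hH : T.nonspanningClosure.IsClosed H) : T.nonspanningClosure (T.greedyGenerators H) = H := by
  refine (ClosureOperator.closure_min greedyGenerators_subset hH).antisymm fun x => ?_
  induction x using WellFoundedLT.induction with
  | _ x ih =>
    intro hxH
    by_cases hx : x ∈ T.greedyGenerators H
    · exact T.nonspanningClosure.le_closure _ hx
    · have hbelow : {y ∈ H | y < x} ⊆ T.nonspanningClosure (T.greedyGenerators H) :=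
        fun y hy => ih y hy.2 hy.1
      exact ClosureOperator.closure_min hbelow (T.nonspanningClosure.isClosed_closure _)
        (not_not.1 fun h => hx ⟨hxH, h⟩)

lemma greedyGenerators_injOn [WellFoundedLT α] :
    InjOn T.greedyGenerators {H | T.nonspanningClosure.IsClosed H} := fun H₁ hH₁ H₂ hH₂ h => by
  rw [← nonspanningClosure_greedyGenerators hH₁, h, nonspanningClosure_greedyGenerators hH₂]

lemma indep_of_subset_greedyGenerators [Finite α] (hH : H ⊆ T.E)
    (hS : S ⊆ T.greedyGenerators H) (hcard : S.ncard ≤ mrk T) : T.Indep S := by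
  by_contra hdep
  obtain ⟨C, hCS, hC⟩ :=
    ((not_indep_iff (hS.trans (greedyGenerators_subset.trans hH))).1 hdep).exists_isCircuit_subset
  obtain ⟨x, hxC, hxmax⟩ := exists_max_image C id C.toFinite hC.nonempty
  have hbelow : C \ {x} ⊆ {y ∈ H | y < x} := fun y hy =>
    ⟨greedyGenerators_subset (hS (hCS hy.1)), (hxmax y hy.1).lt_of_ne hy.2⟩
  have hns : ¬ T.Spanning (C \ {x}) := fun hsp => by
    have := hsp.mrk_le_ncard
    have := ncard_sdiff_singleton_lt_of_mem hxC
    have := ncard_le_ncard hCS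
    omega
  exact (hS (hCS hxC)).2 <|
    isClosed_nonspanningClosure_iff.1 (T.nonspanningClosure.isClosed_closure _) _
      (hbelow.trans (T.nonspanningClosure.le_closure _)) hns
      (hC.mem_closure_sdiff_singleton_of_mem hxC)

end NonspanningClosure

section Hyperplanes

variable [Finite α] {M : Matroid α} {H X : Set α}

def hyperplanes (M : Matroid α) : Set (Set α) :=
  {H | ∃ B, M.Indep B ∧ B.ncard + 1 = mrk M ∧ H = M.closure B}

lemma spanning_iff_forall_hyperplanes (hX : X ⊆ M.E) :
    M.Spanning X ↔ ∀ H ∈ M.hyperplanes, ¬ X ⊆ H := by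
  refine ⟨?_, fun h => by_contra fun hX' => ?_⟩
  · rintro hsp _ ⟨B, hB, hBr, rfl⟩ hXB
    have := ((M.closure_spanning_iff hB.subset_ground).1
      (hsp.superset hXB (M.closure_subset_ground B))).mrk_le_ncard
    omega
  · obtain ⟨I, hI⟩ := M.exists_isBasis X
    have hIr : I.ncard < mrk M := hI.indep.ncard_le_mrk.lt_of_ne fun hIr =>
      hX' ((hI.indep.isBase_of_mrk_le hIr.ge).spanning_of_superset hI.subset)
    obtain ⟨B₀, hB₀, hIB₀⟩ := hI.indep.exists_isBase_superset
    obtain ⟨B, hIB, hBB₀, hB⟩ :=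
      exists_subsuperset_card_eq (n := mrk M - 1) hIB₀ (by omega) (by rw [← hB₀.mrk_eq]; omega)
    exact h _ ⟨B, hB₀.indep.subset hBB₀, by omega, rfl⟩
      (hI.subset_closure.trans (M.closure_subset_closure hIB))

lemma eq_of_hyperplanes_eq {M₁ M₂ : Matroid α} (hE : M₁.E = M₂.E)
    (h : M₁.hyperplanes = M₂.hyperplanes) : M₁ = M₂ :=
  ext_spanning hE fun S hS => by
    rw [spanning_iff_forall_hyperplanes hS, spanning_iff_forall_hyperplanes (hE ▸ hS), h]

lemma isClosed_nonspanningClosure_of_mem_hyperplanes (k : ℕ) (hH : H ∈ M.hyperplanes) :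
    (M.truncate k).nonspanningClosure.IsClosed H := by
  obtain ⟨B, -, -, rfl⟩ := hH
  exact isClosed_nonspanningClosure_truncate_closure M k B

end Hyperplanes

section PavingFamily

variable [Finite α] {r : ℕ} {Ds Ds₁ Ds₂ : Set (Set α)} {D I J : Set α} {x : α}

def IsPavingFamily (r : ℕ) (Ds : Set (Set α)) : Prop :=
  1 ≤ r ∧ ∀ D₁ ∈ Ds, ∀ D₂ ∈ Ds, ∀ S, S ⊆ D₁ → S ⊆ D₂ → S.ncard + 1 = r → D₁ = D₂

def PavingIndep (r : ℕ) (Ds : Set (Set α)) (I : Set α) : Prop :=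
  I.ncard ≤ r ∧ ∀ D ∈ Ds, I ⊆ D → I.ncard < r

lemma PavingIndep.subset (hJ : PavingIndep r Ds J) (hIJ : I ⊆ J) : PavingIndep r Ds I := by
  refine ⟨(ncard_le_ncard hIJ).trans hJ.1, fun D hD hID => ?_⟩
  rcases (ncard_le_ncard hIJ).lt_or_eq with hlt | heq
  · exact hlt.trans_le hJ.1
  · rw [eq_of_subset_of_ncard_le hIJ heq.ge] at hID ⊢
    exact hJ.2 D hD hID

lemma pavingIndep_insert (hx : x ∉ I) (hlt : I.ncard < r)
    (hxD : ∀ D ∈ Ds, I ⊆ D → I.ncard + 1 = r → x ∉ D) : PavingIndep r Ds (insert x I) := by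
  rw [PavingIndep, ncard_insert_of_notMem hx]
  refine ⟨hlt, fun D hD hxID => (Nat.lt_or_ge _ _).resolve_right fun hr => ?_⟩
  exact hxD D hD ((subset_insert x I).trans hxID) (by omega) (hxID (mem_insert x I))

lemma IsPavingFamily.exists_pavingIndep_insert (h : IsPavingFamily r Ds) (hlt : I.ncard < r)
    (hJ : ∀ D ∈ Ds, I ⊆ D → I.ncard + 1 = r → ¬ J ⊆ D)
    (hIJ : I.ncard < J.ncard) : ∃ x ∈ J, x ∉ I ∧ PavingIndep r Ds (insert x I) := by
  by_cases hD₀ : ∃ D₀ ∈ Ds, I ⊆ D₀ ∧ I.ncard + 1 = r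
  · obtain ⟨D₀, hD₀, hID₀, hIr⟩ := hD₀
    obtain ⟨x, hxJ, hxD₀⟩ := not_subset.1 (hJ D₀ hD₀ hID₀ hIr)
    have hxI : x ∉ I := fun hxI => hxD₀ (hID₀ hxI)
    refine ⟨x, hxJ, hxI, pavingIndep_insert hxI hlt fun D hD hID _ => ?_⟩
    rwa [h.2 D hD D₀ hD₀ I hID hID₀ hIr]
  · push Not at hD₀
    obtain ⟨x, hxJ, hxI⟩ := exists_mem_notMem_of_ncard_lt_ncard hIJ
    exact ⟨x, hxJ, hxI, pavingIndep_insert hxI hlt fun D hD hID hIr => absurd hIr (hD₀ D hD hID)⟩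

open Classical in
/-- `freeOn univ` is a junk value for families that are not paving families. -/
noncomputable def pavingOf (r : ℕ) (Ds : Set (Set α)) : Matroid α :=
  if h : IsPavingFamily r Ds then
    (IndepMatroid.ofFinite finite_univ (PavingIndep r Ds)
      ⟨by simp, fun _ _ _ => by rw [ncard_empty]; exact h.1⟩
      (fun _ _ hJ hIJ => hJ.subset hIJ)
      (fun _ _ _ hJ hlt => h.exists_pavingIndep_insert (hlt.trans_le hJ.1)
        (fun D hD _ hIr hJD => by have := hJ.2 D hD hJD; omega) hlt)
      (fun _ _ => subset_univ _)).matroid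
  else freeOn univ

@[simp] lemma pavingOf_ground : (pavingOf r Ds).E = univ := by
  unfold pavingOf
  split_ifs <;> rfl

lemma IsPavingFamily.pavingOf_indep_iff (h : IsPavingFamily r Ds) :
    (pavingOf r Ds).Indep I ↔ PavingIndep r Ds I := by
  rw [pavingOf, dif_pos h]
  rfl

lemma IsPavingFamily.mrk_pavingOf (h : IsPavingFamily r Ds) (hproper : ∀ D ∈ Ds, D ≠ univ)
    (hr : r ≤ Nat.card α) : mrk (pavingOf r Ds) = r := by
  obtain ⟨B, hB⟩ := (pavingOf r Ds).exists_isBase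
  have hBi := h.pavingOf_indep_iff.1 hB.indep
  refine hB.mrk_eq.trans (hBi.1.antisymm (not_lt.1 fun hlt => ?_))
  obtain ⟨x, -, hxB, hins⟩ := h.exists_pavingIndep_insert hlt
    (fun D hD _ _ hD' => hproper D hD (univ_subset_iff.1 hD')) (by rw [ncard_univ]; omega)
  exact hxB (hB.eq_of_subset_indep (h.pavingOf_indep_iff.2 hins) (subset_insert x B) ▸
    mem_insert x B)

lemma IsPavingFamily.paving_pavingOf (h : IsPavingFamily r Ds) : Paving (pavingOf r Ds) := by
  intro C hC
  obtain ⟨B, hB⟩ := (pavingOf r Ds).exists_isBase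
  have hCr : r ≤ C.ncard := not_lt.1 fun hlt =>
    hC.1.not_indep (h.pavingOf_indep_iff.2 ⟨hlt.le, fun _ _ _ => hlt⟩)
  rw [hB.mrk_eq, ← C.toFinite.cast_ncard_eq, Nat.cast_le]
  exact (h.pavingOf_indep_iff.1 hB.indep).1.trans hCr

lemma IsPavingFamily.exists_superset_mem (h : IsPavingFamily r Ds) (hD : r ≤ D.ncard)
    (hsub : ∀ S ⊆ D, S.ncard = r → ∃ D' ∈ Ds, S ⊆ D') : ∃ D' ∈ Ds, D ⊆ D' := by
  have hr := h.1
  obtain ⟨S₀, hS₀D, hS₀⟩ := exists_subset_card_eq (s := D) (n := r - 1) (by omega)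
  have key : ∀ z ∈ D \ S₀, ∃ D' ∈ Ds, insert z S₀ ⊆ D' := fun z hz =>
    hsub _ (insert_subset hz.1 hS₀D) (by rw [ncard_insert_of_notMem hz.2]; omega)
  obtain ⟨z, hzD, hzS₀⟩ := exists_mem_notMem_of_ncard_lt_ncard (s := S₀) (t := D) (by omega)
  obtain ⟨D', hD', hzD'⟩ := key z ⟨hzD, hzS₀⟩
  refine ⟨D', hD', fun d hd => ?_⟩
  by_cases hdS₀ : d ∈ S₀
  · exact hzD' (mem_insert_of_mem z hdS₀)
  obtain ⟨D'', hD'', hdD''⟩ := key d ⟨hd, hdS₀⟩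
  rw [h.2 D' hD' D'' hD'' S₀ ((subset_insert z S₀).trans hzD') ((subset_insert d S₀).trans hdD'')
    (by omega)]
  exact hdD'' (mem_insert d S₀)

lemma IsPavingFamily.exists_superset_of_pavingOf_eq (h₁ : IsPavingFamily r Ds₁)
    (h₂ : IsPavingFamily r Ds₂) (hP : pavingOf r Ds₁ = pavingOf r Ds₂) (hD : D ∈ Ds₁)
    (hbig : r ≤ D.ncard) : ∃ D' ∈ Ds₂, D ⊆ D' := by
  refine h₂.exists_superset_mem hbig fun S hSD hS => ?_
  have hdep : ¬ (pavingOf r Ds₂).Indep S := by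
    rw [← hP, h₁.pavingOf_indep_iff]
    exact fun hi => (hi.2 D hD hSD).ne hS
  rw [h₂.pavingOf_indep_iff] at hdep
  simp only [PavingIndep, hS, le_refl, lt_self_iff_false, true_and, not_forall] at hdep
  obtain ⟨D', hD', hSD', -⟩ := hdep
  exact ⟨D', hD', hSD'⟩

lemma IsPavingFamily.mem_of_pavingOf_eq (h₁ : IsPavingFamily r Ds₁) (h₂ : IsPavingFamily r Ds₂)
    (hP : pavingOf r Ds₁ = pavingOf r Ds₂) (hD : D ∈ Ds₁) (hbig : r ≤ D.ncard) : D ∈ Ds₂ := by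
  obtain ⟨D', hD', hDD'⟩ := h₁.exists_superset_of_pavingOf_eq h₂ hP hD hbig
  obtain ⟨D'', hD'', hD'D''⟩ :=
    h₂.exists_superset_of_pavingOf_eq h₁ hP.symm hD' (hbig.trans (ncard_le_ncard hDD'))
  obtain ⟨S, hSD, hS⟩ := exists_subset_card_eq (s := D) (n := r - 1) (by omega)
  have hDD'' := h₁.2 D hD D'' hD'' S hSD (hSD.trans (hDD'.trans hD'D'')) (by have := h₁.1; omega)
  rwa [hDD'.antisymm (hDD'' ▸ hD'D'')]

end PavingFamily

section Blocks

variable [LinearOrder α] [Finite α] {M M₁ M₂ : Matroid α} {r : ℕ} {D K S : Set α}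

def blocks (M : Matroid α) : Set (Set α) :=
  (M.truncate (mrk M - 1)).greedyGenerators '' M.hyperplanes

lemma closure_greedyGenerators_closure (k : ℕ) (X : Set α) :
    M.closure ((M.truncate k).greedyGenerators (M.closure X)) = M.closure X := by
  set T := M.truncate k
  have hsub : T.greedyGenerators (M.closure X) ⊆ M.closure X := greedyGenerators_subset
  refine (M.closure_closure X ▸ M.closure_subset_closure hsub).antisymm ?_
  calc M.closure X = T.nonspanningClosure (T.greedyGenerators (M.closure X)) :=
        (nonspanningClosure_greedyGenerators
          (isClosed_nonspanningClosure_truncate_closure M k X)).symm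
    _ ⊆ M.closure (T.greedyGenerators (M.closure X)) :=
        ClosureOperator.closure_min (M.subset_closure _ (hsub.trans (M.closure_subset_ground X)))
          (isClosed_nonspanningClosure_truncate_closure M k _)

lemma indep_of_subset_mem_blocks (hD : D ∈ M.blocks) (hSD : S ⊆ D) (hS : S.ncard < mrk M) :
    M.Indep S := by
  obtain ⟨_, ⟨B, -, -, rfl⟩, rfl⟩ := hD
  refine (truncate_indep_iff.1
    (indep_of_subset_greedyGenerators (M.closure_subset_ground B) hSD ?_)).1
  rw [mrk_truncate (Nat.sub_le _ _)]
  omega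

lemma isPavingFamily_blocks (hr : 1 ≤ mrk M) : IsPavingFamily (mrk M) M.blocks := by
  refine ⟨hr, ?_⟩
  intro D₁ hD₁ D₂ hD₂ S hS₁ hS₂ hS
  have hSi := indep_of_subset_mem_blocks hD₁ hS₁ (by omega)
  obtain ⟨_, ⟨B₁, hB₁, hB₁r, rfl⟩, rfl⟩ := hD₁
  obtain ⟨_, ⟨B₂, hB₂, hB₂r, rfl⟩, rfl⟩ := hD₂
  rw [← hSi.closure_eq_of_subset_closure_s8 hB₁ (hS₁.trans greedyGenerators_subset) (by omega),
    hSi.closure_eq_of_subset_closure_s8 hB₂ (hS₂.trans greedyGenerators_subset) (by omega)]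

lemma mrk_pavingOf_blocks (hE : M.E = univ) (hr : 1 ≤ mrk M) :
    mrk (pavingOf (mrk M) M.blocks) = mrk M := by
  refine (isPavingFamily_blocks hr).mrk_pavingOf ?_ ?_
  · rintro _ ⟨H, hH, rfl⟩ hD
    refine (spanning_iff_forall_hyperplanes subset_rfl).1 M.ground_spanning H hH ?_
    rw [hE, ← hD]
    exact greedyGenerators_subset
  · obtain ⟨B, hB⟩ := M.exists_isBase
    rw [hB.mrk_eq, ← ncard_univ]
    exact ncard_le_ncard (subset_univ B)

lemma isBase_truncate_greedyGenerators (hK : K ∈ M.hyperplanes)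
    (hlt : ((M.truncate (mrk M - 1)).greedyGenerators K).ncard < mrk M) :
    (M.truncate (mrk M - 1)).IsBase ((M.truncate (mrk M - 1)).greedyGenerators K) := by
  obtain ⟨B, hB, hBr, rfl⟩ := hK
  have hBD := hB.ncard_le_of_subset_closure
    ((closure_greedyGenerators_closure (mrk M - 1) B).symm ▸ M.subset_closure B hB.subset_ground)
  have hmrk := mrk_truncate (M := M) (Nat.sub_le (mrk M) 1)
  refine (indep_of_subset_greedyGenerators (T := M.truncate (mrk M - 1))
    (M.closure_subset_ground B) subset_rfl ?_).isBase_of_mrk_le ?_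
  all_goals omega

lemma ncard_greedyGenerators_lt_of_notMem (hM₁ : mrk M₁ = r) (hM₂ : mrk M₂ = r) (hr : 1 ≤ r)
    (hT : M₁.truncate (r - 1) = M₂.truncate (r - 1))
    (hP : pavingOf r M₁.blocks = pavingOf r M₂.blocks)
    (hK₂ : K ∈ M₂.hyperplanes) (hK₁ : K ∉ M₁.hyperplanes) :
    ((M₂.truncate (r - 1)).greedyGenerators K).ncard < r := by
  have h₁ : IsPavingFamily r M₁.blocks := hM₁ ▸ isPavingFamily_blocks (hM₁ ▸ hr)
  have h₂ : IsPavingFamily r M₂.blocks := hM₂ ▸ isPavingFamily_blocks (hM₂ ▸ hr)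
  refine not_le.1 fun hbig => hK₁ ?_
  obtain ⟨H, hH, hHK⟩ := h₂.mem_of_pavingOf_eq h₁ hP.symm ⟨K, hK₂, by rw [hM₂]⟩ hbig
  rw [hM₁, hT] at hHK
  have hHcl := hT ▸ isClosed_nonspanningClosure_of_mem_hyperplanes (r - 1) hH
  rwa [← greedyGenerators_injOn hHcl
    (isClosed_nonspanningClosure_of_mem_hyperplanes (r - 1) hK₂) hHK]

lemma exists_hyperplanes_ssuperset (hM₁ : mrk M₁ = r) (hM₂ : mrk M₂ = r) (hr : 1 ≤ r)
    (hT : M₁.truncate (r - 1) = M₂.truncate (r - 1))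
    (hP : pavingOf r M₁.blocks = pavingOf r M₂.blocks)
    (hK₂ : K ∈ M₂.hyperplanes) (hK₁ : K ∉ M₁.hyperplanes) :
    ∃ H ∈ M₁.hyperplanes \ M₂.hyperplanes, K ⊂ H := by
  set D := (M₂.truncate (r - 1)).greedyGenerators K
  have hDT : (M₂.truncate (r - 1)).IsBase D := by
    subst hM₂
    exact isBase_truncate_greedyGenerators hK₂
      (ncard_greedyGenerators_lt_of_notMem hM₁ rfl hr hT hP hK₂ hK₁)
  have hDr : D.ncard + 1 = r := by
    rw [hDT.mrk_eq.symm.trans (mrk_truncate (hM₂ ▸ Nat.sub_le r 1))]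
    omega
  have hD₁ : M₁.Indep D := (truncate_indep_iff.1 (hT ▸ hDT.indep)).1
  have hD₂ : M₂.Indep D := (truncate_indep_iff.1 hDT.indep).1
  have hKH : K ⊆ M₁.closure D :=
    (nonspanningClosure_greedyGenerators
      (isClosed_nonspanningClosure_of_mem_hyperplanes _ hK₂)).symm.le.trans
      (ClosureOperator.closure_min (M₁.subset_closure D hD₁.subset_ground)
        (by rw [← hT]; exact isClosed_nonspanningClosure_truncate_closure M₁ (r - 1) D))
  have hne : K ≠ M₁.closure D := fun h => hK₁ ⟨D, hD₁, hM₁ ▸ hDr, h⟩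
  refine ⟨M₁.closure D, ⟨⟨D, hD₁, hM₁ ▸ hDr, rfl⟩, ?_⟩, hKH.ssubset_of_ne hne⟩
  rintro ⟨B, hB, hBr, hH⟩
  obtain ⟨B₀, -, -, rfl⟩ := hK₂
  apply hne
  rw [← closure_greedyGenerators_closure (r - 1) B₀, hH,
    hD₂.closure_eq_of_subset_closure_s8 hB (hH ▸ M₁.subset_closure D hD₁.subset_ground) (by omega)]

end Blocks

theorem eq_of_truncate_eq_of_pavingOf_eq [LinearOrder α] [Finite α] {M₁ M₂ : Matroid α} {r : ℕ}
    (hE : M₁.E = M₂.E) (hM₁ : mrk M₁ = r) (hM₂ : mrk M₂ = r) (hr : 1 ≤ r)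
    (hT : M₁.truncate (r - 1) = M₂.truncate (r - 1))
    (hP : pavingOf r M₁.blocks = pavingOf r M₂.blocks) : M₁ = M₂ :=
  eq_of_hyperplanes_eq hE <| eq_of_forall_mem_sdiff_exists_ssuperset
    (fun _ hK => exists_hyperplanes_ssuperset hM₂ hM₁ hr hT.symm hP.symm hK.1 hK.2)
    (fun _ hK => exists_hyperplanes_ssuperset hM₁ hM₂ hr hT hP hK.1 hK.2)

end Matroid

/-- For all n and r ≥ 1, m(n,r) ≤ m(n,r−1) · p(n,r). -/
theorem numMatroids_le_mul (n r : ℕ) (hr : 1 ≤ r) :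
    numMatroids n r ≤ numMatroids n (r - 1) * numPaving n r := by
  have hmaps : ∀ M ∈ {M : Matroid (Fin n) | M.E = univ ∧ mrk M = r},
      (M.truncate (r - 1), pavingOf r M.blocks) ∈
        {M : Matroid (Fin n) | M.E = univ ∧ mrk M = r - 1} ×ˢ
          {M : Matroid (Fin n) | M.E = univ ∧ mrk M = r ∧ Paving M} := by
    rintro M ⟨hE, rfl⟩
    exact ⟨⟨truncate_ground.trans hE, mrk_truncate (Nat.sub_le _ _)⟩, pavingOf_ground,
      mrk_pavingOf_blocks hE hr, (isPavingFamily_blocks hr).paving_pavingOf⟩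
  have hinj : InjOn (fun M : Matroid (Fin n) => (M.truncate (r - 1), pavingOf r M.blocks))
      {M | M.E = univ ∧ mrk M = r} := fun M₁ ⟨hE₁, hM₁⟩ M₂ ⟨hE₂, hM₂⟩ h =>
    eq_of_truncate_eq_of_pavingOf_eq (hE₁.trans hE₂.symm) hM₁ hM₂ hr (Prod.ext_iff.1 h).1
      (Prod.ext_iff.1 h).2
  exact (ncard_le_ncard_of_injOn _ hmaps hinj (toFinite _)).trans_eq ncard_prod
end

section
/- Let 0 ≤ t ≤ r ≤ n, and let 𝓜 be a class of matroids that is closed under contraction and under isomorphism. Write \tilde m(n,r) for the number of members of 𝓜 with ground set {1,…,n} and rank r. Then log( \tilde m(n,r) + 1 ) ≤ ( C(n,r) / C(n−t, r−t) ) · log( \tilde m(n−t, r−t) + 1 ). -/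
open Matroid Set Filter Real

namespace PavingEnum

/-- The contraction `M / C`, defined by duality from restriction. -/
noncomputable def mcontract {α : Type*} (M : Matroid α) (C : Set α) : Matroid α :=
  (M✶ ↾ (M.E \ C))✶

/-- An isomorphism between matroids: a bijection between the ground sets
preserving independence. -/
def MatroidIso {α β : Type*} (M : Matroid α) (N : Matroid β) : Prop :=
  ∃ e : M.E ≃ N.E, ∀ I : Set M.E,
    M.Indep ((↑) '' I) ↔ N.Indep ((↑) '' (e '' I))

/-- The number of members of the class `𝓜` with ground set `{1, …, n}` and rank `r`. -/
noncomputable def classCount (𝓜 : ∀ ⦃α : Type⦄, Matroid α → Prop) (n r : ℕ) : ℕ :=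
  {M : Matroid (Fin n) | 𝓜 M ∧ M.E = Set.univ ∧ mrk M = r}.ncard

end PavingEnum

open PavingEnum

/-!
Encode a matroid on `Fin n` of rank `r` by its family of bases, a family of `r`-subsets, and add
the empty family. For a `t`-set `T`, the bases containing `T` are either none (if `T` is dependent)
or the lifts `B' ∪ T` of the bases `B'` of the contraction `M / T`, which, relabelled onto
`Fin (n - t)`, is a member of the class of rank `r - t`. So each of the `C(n, t)` windows
`{B | T ⊆ B}` sees at most `m̃(n - t, r - t) + 1` distinct traces, while every `r`-set lies in
exactly `C(r, t)` windows. Shearer's lemma in its counting form (by induction on the ground set,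
using superadditivity of the geometric mean) then gives
`m̃(n, r) + 1 ≤ (m̃(n - t, r - t) + 1) ^ (C(n, t) / C(r, t))`, and
`C(n, t) / C(r, t) = C(n, r) / C(n - t, r - t)`.
-/

section

open Finset

namespace Real

variable {ι : Type*} {s K : Finset ι} {w a b c : ι → ℝ}

lemma prod_rpow_add_prod_rpow_le (hw : ∀ i ∈ s, 0 ≤ w i) (hw₁ : ∑ i ∈ s, w i = 1)
    (ha : ∀ i ∈ s, 0 ≤ a i) (hb : ∀ i ∈ s, 0 ≤ b i) :
    ∏ i ∈ s, a i ^ w i + ∏ i ∈ s, b i ^ w i ≤ ∏ i ∈ s, (a i + b i) ^ w i := by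
  have hab : ∀ i ∈ s, 0 ≤ a i + b i := fun i hi => add_nonneg (ha i hi) (hb i hi)
  -- Factor out `∏ (a + b) ^ w` and apply AM-GM to the normalized terms; where `a + b = 0`,
  -- the junk value `0 / 0 = 0` is harmless because then `a = b = 0`.
  have factor : ∀ f : ι → ℝ, (∀ i ∈ s, 0 ≤ f i) → (∀ i ∈ s, f i ≤ a i + b i) →
      ∏ i ∈ s, f i ^ w i =
        (∏ i ∈ s, (f i / (a i + b i)) ^ w i) * ∏ i ∈ s, (a i + b i) ^ w i := by
    intro f hf hfab
    rw [← prod_mul_distrib]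
    refine prod_congr rfl fun i hi => ?_
    rw [← mul_rpow (div_nonneg (hf i hi) (hab i hi)) (hab i hi)]
    rcases (hab i hi).eq_or_lt with h0 | hpos
    · rw [← h0, mul_zero, le_antisymm (h0 ▸ hfab i hi) (hf i hi)]
    · rw [div_mul_cancel₀ _ hpos.ne']
  have amgm : ∀ f : ι → ℝ, (∀ i ∈ s, 0 ≤ f i) → (∀ i ∈ s, f i ≤ a i + b i) →
      ∏ i ∈ s, (f i / (a i + b i)) ^ w i ≤ ∑ i ∈ s, w i * (f i / (a i + b i)) :=
    fun f hf _ => geom_mean_le_arith_mean_weighted s _ _ hw hw₁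
      fun i hi => div_nonneg (hf i hi) (hab i hi)
  have hsum : ∑ i ∈ s, w i * (a i / (a i + b i)) + ∑ i ∈ s, w i * (b i / (a i + b i)) ≤ 1 := by
    rw [← sum_add_distrib, ← hw₁]
    refine sum_le_sum fun i hi => ?_
    rw [← mul_add, ← add_div]
    exact mul_le_of_le_one_right (hw i hi) (div_self_le_one _)
  have hale : ∀ i ∈ s, a i ≤ a i + b i := fun i hi => le_add_of_nonneg_right (hb i hi)
  have hble : ∀ i ∈ s, b i ≤ a i + b i := fun i hi => le_add_of_nonneg_left (ha i hi)
  rw [factor a ha hale, factor b hb hble, ← add_mul]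
  refine mul_le_of_le_one_left (prod_nonneg fun i hi => rpow_nonneg (hab i hi) _) ?_
  linarith [amgm a ha hale, amgm b hb hble]

lemma prod_rpow_add_prod_rpow_le_of_subset (hK : K ⊆ s) (hw : ∀ i ∈ s, 0 ≤ w i)
    (hw₁ : ∑ i ∈ K, w i = 1) (ha : ∀ i ∈ s, 0 ≤ a i) (hb : ∀ i ∈ s, 0 ≤ b i)
    (hac : ∀ i ∈ s, a i ≤ c i) (hbc : ∀ i ∈ s, b i ≤ c i) (habc : ∀ i ∈ K, a i + b i ≤ c i) :
    ∏ i ∈ s, a i ^ w i + ∏ i ∈ s, b i ^ w i ≤ ∏ i ∈ s, c i ^ w i := by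
  classical
  have hout : ∀ f : ι → ℝ, (∀ i ∈ s, 0 ≤ f i) → (∀ i ∈ s, f i ≤ c i) →
      ∏ i ∈ s \ K, f i ^ w i ≤ ∏ i ∈ s \ K, c i ^ w i := fun f hf hfc =>
    prod_le_prod (fun i hi => rpow_nonneg (hf i (mem_sdiff.1 hi).1) _) fun i hi =>
      rpow_le_rpow (hf i (mem_sdiff.1 hi).1) (hfc i (mem_sdiff.1 hi).1) (hw i (mem_sdiff.1 hi).1)
  have hin : ∏ i ∈ K, a i ^ w i + ∏ i ∈ K, b i ^ w i ≤ ∏ i ∈ K, c i ^ w i :=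
    (prod_rpow_add_prod_rpow_le (fun i hi => hw i (hK hi)) hw₁ (fun i hi => ha i (hK hi))
      (fun i hi => hb i (hK hi))).trans <| prod_le_prod
        (fun i hi => rpow_nonneg (add_nonneg (ha i (hK hi)) (hb i (hK hi))) _) fun i hi =>
          rpow_le_rpow (add_nonneg (ha i (hK hi)) (hb i (hK hi))) (habc i hi) (hw i (hK hi))
  have hK_nonneg : ∀ f : ι → ℝ, (∀ i ∈ s, 0 ≤ f i) → 0 ≤ ∏ i ∈ K, f i ^ w i := fun f hf =>
    prod_nonneg fun i hi => rpow_nonneg (hf i (hK hi)) _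
  rw [← prod_sdiff hK, ← prod_sdiff hK (f := fun i => b i ^ w i),
    ← prod_sdiff hK (f := fun i => c i ^ w i)]
  calc _ ≤ (∏ i ∈ s \ K, c i ^ w i) * ∏ i ∈ K, a i ^ w i +
        (∏ i ∈ s \ K, c i ^ w i) * ∏ i ∈ K, b i ^ w i :=
        add_le_add (mul_le_mul_of_nonneg_right (hout a ha hac) (hK_nonneg a ha))
          (mul_le_mul_of_nonneg_right (hout b hb hbc) (hK_nonneg b hb))
    _ ≤ _ := by
        rw [← mul_add]
        exact mul_le_mul_of_nonneg_left hin <| prod_nonneg fun i hi =>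
          rpow_nonneg ((ha i (mem_sdiff.1 hi).1).trans (hac i (mem_sdiff.1 hi).1)) _
end Real

namespace Finset


variable {α : Type*} [DecidableEq α] {𝒜 : Finset (Finset α)} {a : α} {t : Finset α}

lemma image_inter_memberSubfamily (ha : a ∈ t) :
    (𝒜.memberSubfamily a).image (· ∩ t) = (𝒜.image (· ∩ t)).memberSubfamily a := by
  ext u
  simp only [mem_image, mem_memberSubfamily]
  constructor
  · rintro ⟨s, ⟨hs, has⟩, rfl⟩
    refine ⟨⟨insert a s, hs, ?_⟩, fun h => has (mem_inter.1 h).1⟩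
    rw [insert_inter_of_mem ha]
  · rintro ⟨⟨s, hs, hst⟩, hau⟩
    have has : a ∈ s := (mem_inter.1 (hst ▸ mem_insert_self a u)).1
    refine ⟨s.erase a, ⟨by rwa [insert_erase has], notMem_erase a s⟩, ?_⟩
    rw [erase_inter, hst, erase_insert hau]

lemma image_inter_nonMemberSubfamily (ha : a ∈ t) :
    (𝒜.nonMemberSubfamily a).image (· ∩ t) = (𝒜.image (· ∩ t)).nonMemberSubfamily a := by
  ext u
  simp only [mem_image, mem_nonMemberSubfamily]
  constructor
  · rintro ⟨s, ⟨hs, has⟩, rfl⟩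
    exact ⟨⟨s, hs, rfl⟩, fun h => has (mem_inter.1 h).1⟩
  · rintro ⟨⟨s, hs, rfl⟩, has⟩
    exact ⟨s, ⟨hs, fun h => has (mem_inter.2 ⟨h, ha⟩)⟩, rfl⟩

lemma card_image_inter_memberSubfamily_add_card_image_inter_nonMemberSubfamily (ha : a ∈ t) :
    #((𝒜.memberSubfamily a).image (· ∩ t)) + #((𝒜.nonMemberSubfamily a).image (· ∩ t)) =
      #(𝒜.image (· ∩ t)) := by
  rw [image_inter_memberSubfamily ha, image_inter_nonMemberSubfamily ha,
    card_memberSubfamily_add_card_nonMemberSubfamily]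

lemma card_image_inter_nonMemberSubfamily_le :
    #((𝒜.nonMemberSubfamily a).image (· ∩ t)) ≤ #(𝒜.image (· ∩ t)) :=
  card_le_card (image_subset_image (filter_subset _ _))

lemma card_image_inter_memberSubfamily_le :
    #((𝒜.memberSubfamily a).image (· ∩ t)) ≤ #(𝒜.image (· ∩ t)) := by
  by_cases ha : a ∈ t
  · exact (Nat.le_add_right _ _).trans_eq
      (card_image_inter_memberSubfamily_add_card_image_inter_nonMemberSubfamily ha)
  · refine card_le_card fun u hu => ?_
    obtain ⟨s, hs, rfl⟩ := mem_image.1 hu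
    exact mem_image.2 ⟨insert a s, (mem_memberSubfamily.1 hs).1, insert_inter_of_notMem ha⟩

lemma card_filter_mem_Ici_powersetCard [Fintype α] (t : ℕ)
    (B : Finset α) : #{T ∈ powersetCard t univ | B ∈ Ici T} =
      (#B).choose t := by
  rw [← card_powersetCard]
  congr 1
  ext T
  simp [mem_powersetCard, and_comm]

theorem card_le_prod_card_image_inter_rpow {J : Type*} {k : ℕ} (hk : 0 < k) (js : Finset J)
    (S : J → Finset α) (𝒜 : Finset (Finset α))
    (hcov : ∀ s ∈ 𝒜, ∀ i ∈ s, k ≤ #{j ∈ js | i ∈ S j}) :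
    (#𝒜 : ℝ) ≤ ∏ j ∈ js, (#(𝒜.image (· ∩ S j)) : ℝ) ^ ((k : ℝ)⁻¹) := by
  induction 𝒜 using memberFamily_induction_on with
  | empty => simp [Real.zero_rpow_nonneg]
  | singleton_empty => simp
  | @subfamily a 𝒜 ih₀ ih₁ =>
    have hcov₀ : ∀ s ∈ 𝒜.nonMemberSubfamily a, ∀ i ∈ s, k ≤ #{j ∈ js | i ∈ S j} :=
      fun s hs => hcov s (mem_nonMemberSubfamily.1 hs).1
    by_cases ha : ∃ s ∈ 𝒜, a ∈ s
    swap
    · push Not at ha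
      rw [← filter_true_of_mem ha]
      exact ih₀ hcov₀
    obtain ⟨s, hs, has⟩ := ha
    obtain ⟨K, hKa, hK⟩ := exists_subset_card_eq (hcov s hs a has)
    have hcov₁ : ∀ s ∈ 𝒜.memberSubfamily a, ∀ i ∈ s, k ≤ #{j ∈ js | i ∈ S j} :=
      fun s hs i hi => hcov _ (mem_memberSubfamily.1 hs).1 i (mem_insert_of_mem hi)
    calc (#𝒜 : ℝ) = #(𝒜.memberSubfamily a) + #(𝒜.nonMemberSubfamily a) := by
          exact_mod_cast (card_memberSubfamily_add_card_nonMemberSubfamily a 𝒜).symm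
      _ ≤ _ := add_le_add (ih₁ hcov₁) (ih₀ hcov₀)
      _ ≤ _ := by
        refine Real.prod_rpow_add_prod_rpow_le_of_subset (hKa.trans (filter_subset _ _))
          (fun _ _ => by positivity) ?_ (fun _ _ => by positivity) (fun _ _ => by positivity)
          (fun j _ => mod_cast card_image_inter_memberSubfamily_le)
          (fun j _ => mod_cast card_image_inter_nonMemberSubfamily_le) fun j hj => ?_
        · rw [sum_const, hK, nsmul_eq_mul, mul_inv_cancel₀ (by positivity)]
        · exact_mod_cast
            (card_image_inter_memberSubfamily_add_card_image_inter_nonMemberSubfamily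
              (mem_filter.1 (hKa hj)).2).le

theorem card_le_rpow_of_card_image_inter_le {J : Type*} {k m : ℕ} (hk : 0 < k) (js : Finset J)
    (S : J → Finset α) (𝒜 : Finset (Finset α))
    (hcov : ∀ s ∈ 𝒜, ∀ i ∈ s, k ≤ #{j ∈ js | i ∈ S j})
    (hm : ∀ j ∈ js, #(𝒜.image (· ∩ S j)) ≤ m) :
    (#𝒜 : ℝ) ≤ (m : ℝ) ^ ((#js : ℝ) / k) := by
  calc (#𝒜 : ℝ) ≤ ∏ j ∈ js, (#(𝒜.image (· ∩ S j)) : ℝ) ^ ((k : ℝ)⁻¹) :=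
        card_le_prod_card_image_inter_rpow hk js S 𝒜 hcov
    _ ≤ ∏ j ∈ js, (m : ℝ) ^ ((k : ℝ)⁻¹) :=
        prod_le_prod (fun _ _ => by positivity) fun j hj =>
          Real.rpow_le_rpow (by positivity) (mod_cast hm j hj) (by positivity)
    _ = (m : ℝ) ^ ((#js : ℝ) / k) := by
        rw [prod_const, ← Real.rpow_natCast, ← Real.rpow_mul (by positivity), inv_mul_eq_div]

end Finset

end

open scoped Finset

namespace PavingEnum

variable {α β : Type*}

lemma mrk_eq_ncard_of_isBase {M : Matroid α} {B : Set α} (hB : M.IsBase B) :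
    mrk M = B.ncard := by
  have hbases : {n : ℕ | ∃ B', M.IsBase B' ∧ B'.ncard = n} = {B.ncard} := by
    ext n
    constructor
    · rintro ⟨B', hB', rfl⟩
      exact hB'.ncard_eq_ncard_of_isBase hB
    · rintro rfl
      exact ⟨B, hB, rfl⟩
  rw [mrk, hbases, csSup_singleton]

lemma comap_isBase_iff_of_range_eq {N : Matroid α} {ψ : β → α} (hψ : Function.Injective ψ)
    (hrange : range ψ = N.E) {B : Set β} : (N.comap ψ).IsBase B ↔ N.IsBase (ψ '' B) := by
  rw [comap_isBase_iff, image_preimage_eq_inter_range, hrange, inter_self, isBasis_ground_iff,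
    preimage_eq_univ_iff.2 hrange.subset]
  simp [hψ.injOn]

lemma matroidIso_comap {N : Matroid α} {ψ : β → α} (hψ : Function.Injective ψ)
    (hrange : range ψ = N.E) : MatroidIso N (N.comap ψ) := by
  have hbij : BijOn ψ (ψ ⁻¹' N.E) N.E :=
    ⟨fun _ h => h, hψ.injOn, hrange ▸ fun _ ⟨b, hb⟩ => ⟨b, by simp, hb⟩⟩
  let e : N.E ≃ (N.comap ψ).E := (hbij.equiv ψ).symm
  refine ⟨e, fun I => ?_⟩
  have hψe : ψ '' ((↑) '' (e '' I)) = (↑) '' I := by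
    rw [image_image, image_image]
    exact image_congr fun x _ => congrArg Subtype.val ((hbij.equiv ψ).apply_symm_apply x)
  rw [comap_indep_iff, hψe, iff_self_and]
  exact fun _ => hψ.injOn

lemma mcontract_eq_contract (M : Matroid α) (C : Set α) : mcontract M C = M ／ C := rfl

open Classical in
noncomputable def baseFinset [Fintype α] (M : Matroid α) : Finset (Finset α) :=
  {B | M.IsBase ↑B}

section baseFinset

variable [Fintype α] {M : Matroid α} {B : Finset α}

lemma mem_baseFinset : B ∈ baseFinset M ↔ M.IsBase ↑B := by
  simp [baseFinset]

lemma baseFinset_nonempty (M : Matroid α) : (baseFinset M).Nonempty := by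
  obtain ⟨B, hB⟩ := M.exists_isBase
  lift B to Finset α using B.toFinite
  exact ⟨B, mem_baseFinset.2 hB⟩

lemma baseFinset_injOn : InjOn baseFinset {M : Matroid α | M.E = univ} := by
  intro M₁ h₁ M₂ h₂ h
  refine ext_isBase (h₁.trans h₂.symm) fun B _ => ?_
  lift B to Finset α using B.toFinite
  rw [← mem_baseFinset, ← mem_baseFinset, h]

lemma card_of_mem_baseFinset (hB : B ∈ baseFinset M) : #B = mrk M := by
  rw [mrk_eq_ncard_of_isBase (mem_baseFinset.1 hB), ncard_coe_finset]

lemma baseFinset_inter_Ici_eq_empty [DecidableEq α] {T : Finset α} (hTd : ¬M.Indep T) :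
    baseFinset M ∩ Finset.Ici T = ∅ := by
  refine Finset.eq_empty_of_forall_notMem fun B hB => hTd ?_
  simp only [Finset.mem_inter, mem_baseFinset, Finset.mem_Ici] at hB
  exact hB.1.indep.subset (Finset.coe_subset.2 hB.2)

end baseFinset

section contractFin

variable {n t : ℕ} {M : Matroid (Fin n)} {T : Finset (Fin n)}

noncomputable def complEmb (T : Finset (Fin n)) (hT : #T = t) : Fin (n - t) ↪o Fin n :=
  Tᶜ.orderEmbOfFin (by rw [Finset.card_compl, Fintype.card_fin, hT])

noncomputable def contractFin (M : Matroid (Fin n)) (T : Finset (Fin n)) (hT : #T = t) :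
    Matroid (Fin (n - t)) :=
  (mcontract M T).comap (complEmb T hT)

lemma range_complEmb (hT : #T = t) : range (complEmb T hT) = (↑T)ᶜ := by
  rw [complEmb, Finset.range_orderEmbOfFin, Finset.coe_compl]

lemma range_complEmb_eq_ground (hT : #T = t) (hME : M.E = univ) :
    range (complEmb T hT) = (mcontract M T).E := by
  rw [range_complEmb, mcontract_eq_contract, contract_ground, hME, compl_eq_univ_sdiff]

lemma contractFin_ground (hT : #T = t) (hME : M.E = univ) : (contractFin M T hT).E = univ := by
  rw [contractFin, comap_ground_eq, ← range_complEmb_eq_ground hT hME, preimage_range]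

lemma isBase_contractFin_iff (hT : #T = t) (hME : M.E = univ) (hTi : M.Indep T)
    {B : Set (Fin (n - t))} :
    (contractFin M T hT).IsBase B ↔ M.IsBase (complEmb T hT '' B ∪ T) := by
  rw [contractFin, comap_isBase_iff_of_range_eq (complEmb T hT).injective
    (range_complEmb_eq_ground hT hME), mcontract_eq_contract, hTi.contract_isBase_iff,
    and_iff_left_iff_imp]
  intro _
  rw [← subset_compl_iff_disjoint_right, ← range_complEmb hT]
  exact image_subset_range _ _

lemma isBase_contractFin_preimage_iff (hT : #T = t) (hME : M.E = univ) (hTi : M.Indep T)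
    {B : Set (Fin n)} (hTB : ↑T ⊆ B) :
    (contractFin M T hT).IsBase (complEmb T hT ⁻¹' B) ↔ M.IsBase B := by
  rw [isBase_contractFin_iff hT hME hTi, image_preimage_eq_inter_range, range_complEmb,
    ← sdiff_eq, sdiff_union_of_subset hTB]

lemma mrk_contractFin {r : ℕ} (hT : #T = t) (hME : M.E = univ) (hTi : M.Indep T)
    (hMr : mrk M = r) : mrk (contractFin M T hT) = r - t := by
  obtain ⟨B, hB⟩ := (contractFin M T hT).exists_isBase
  have hMB := (isBase_contractFin_iff hT hME hTi).1 hB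
  have hdisj : Disjoint (complEmb T hT '' B) T := by
    rw [← subset_compl_iff_disjoint_right, ← range_complEmb hT]
    exact image_subset_range _ _
  have hcard := mrk_eq_ncard_of_isBase hMB
  rw [hMr, ncard_union_eq hdisj, ncard_image_of_injective _ (complEmb T hT).injective,
    ncard_coe_finset, hT] at hcard
  rw [mrk_eq_ncard_of_isBase hB]
  omega

end contractFin

section counting

variable {n t : ℕ}

open Classical in
noncomputable def liftBases (T : Finset (Fin n)) (hT : #T = t) (N : Matroid (Fin (n - t))) :
    Finset (Finset (Fin n)) :=
  {B | T ⊆ B ∧ N.IsBase (complEmb T hT ⁻¹' ↑B)}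

lemma baseFinset_inter_Ici_eq_liftBases {M : Matroid (Fin n)} {T : Finset (Fin n)} (hT : #T = t)
    (hME : M.E = univ) (hTi : M.Indep T) :
    baseFinset M ∩ Finset.Ici T = liftBases T hT (contractFin M T hT) := by
  ext B
  simp only [liftBases, Finset.mem_inter, mem_baseFinset, Finset.mem_Ici, Finset.mem_filter,
    Finset.mem_univ, true_and]
  constructor
  · rintro ⟨hB, hTB⟩
    exact ⟨hTB, (isBase_contractFin_preimage_iff hT hME hTi (Finset.coe_subset.2 hTB)).2 hB⟩
  · rintro ⟨hTB, hB⟩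
    exact ⟨(isBase_contractFin_preimage_iff hT hME hTi (Finset.coe_subset.2 hTB)).1 hB, hTB⟩

variable (𝓜 : ∀ ⦃α : Type⦄, Matroid α → Prop)
  (hcontract : ∀ (α : Type) (M : Matroid α) (C : Set α), 𝓜 M → 𝓜 (mcontract M C))
  (hiso : ∀ (α β : Type) (M : Matroid α) (N : Matroid β), 𝓜 M → MatroidIso M N → 𝓜 N)

include hcontract hiso in
lemma contractFin_mem {M : Matroid (Fin n)} {T : Finset (Fin n)} (hT : #T = t)
    (hME : M.E = univ) (hM : 𝓜 M) : 𝓜 (contractFin M T hT) :=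
  hiso _ _ _ _ (hcontract _ M T hM)
    (matroidIso_comap (complEmb T hT).injective (range_complEmb_eq_ground hT hME))

include hcontract hiso in
lemma card_image_inter_Ici_le {r : ℕ} {P : Finset (Matroid (Fin n))}
    {Q : Finset (Matroid (Fin (n - t)))} (hP : ∀ M ∈ P, 𝓜 M ∧ M.E = univ ∧ mrk M = r)
    (hQ : ∀ N : Matroid (Fin (n - t)), 𝓜 N ∧ N.E = univ ∧ mrk N = r - t → N ∈ Q)
    {T : Finset (Fin n)} (hT : #T = t) :
    #((insert ∅ (P.image baseFinset)).image (· ∩ Finset.Ici T)) ≤ #Q + 1 := by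
  classical
  have htraces : (insert ∅ (P.image baseFinset)).image (· ∩ Finset.Ici T) ⊆
      insert ∅ (Q.image (liftBases T hT)) := by
    simp only [Finset.image_subset_iff, Finset.forall_mem_insert, Finset.forall_mem_image,
      Finset.empty_inter, Finset.mem_insert_self, true_and]
    intro M hM
    obtain ⟨h𝓜, hME, hMr⟩ := hP M hM
    by_cases hTi : M.Indep T
    · rw [baseFinset_inter_Ici_eq_liftBases hT hME hTi]
      exact Finset.mem_insert_of_mem (Finset.mem_image_of_mem _ (hQ _
        ⟨contractFin_mem 𝓜 hcontract hiso hT hME h𝓜, contractFin_ground hT hME,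
          mrk_contractFin hT hME hTi hMr⟩))
    · rw [baseFinset_inter_Ici_eq_empty hTi]
      exact Finset.mem_insert_self _ _
  calc _ ≤ #(insert ∅ (Q.image (liftBases T hT))) := Finset.card_le_card htraces
    _ ≤ #(Q.image (liftBases T hT)) + 1 := Finset.card_insert_le _ _
    _ ≤ #Q + 1 := Nat.add_le_add_right Finset.card_image_le _

lemma exists_finset_classCount (n r : ℕ) : ∃ P : Finset (Matroid (Fin n)),
    (∀ M, M ∈ P ↔ 𝓜 M ∧ M.E = univ ∧ mrk M = r) ∧ classCount 𝓜 n r = #P := by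
  have hfin : {M : Matroid (Fin n) | 𝓜 M ∧ M.E = univ ∧ mrk M = r}.Finite :=
    (finite_setOfPred_matroid' finite_univ).subset fun M hM => hM.2.1
  refine ⟨hfin.toFinset, fun M => hfin.mem_toFinset, ?_⟩
  rw [classCount, ncard_eq_toFinset_card _ hfin]

include hcontract hiso in
theorem classCount_add_one_le_rpow {r : ℕ} (htr : t ≤ r) :
    (classCount 𝓜 n r + 1 : ℝ) ≤
      (classCount 𝓜 (n - t) (r - t) + 1 : ℝ) ^ ((n.choose t : ℝ) / r.choose t) := by
  classical
  obtain ⟨P, hPmem, hPcount⟩ := exists_finset_classCount 𝓜 n r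
  obtain ⟨Q, hQmem, hQcount⟩ := exists_finset_classCount 𝓜 (n - t) (r - t)
  set 𝒜 := insert ∅ (P.image baseFinset)
  have h𝒜 : #𝒜 = #P + 1 := by
    rw [Finset.card_insert_of_notMem, Finset.card_image_of_injOn (baseFinset_injOn.mono
      fun M hM => ((hPmem M).1 hM).2.1)]
    simp only [Finset.mem_image, not_exists, not_and]
    exact fun M _ h => (baseFinset_nonempty M).ne_empty h
  have hcov : ∀ x ∈ 𝒜, ∀ B ∈ x,
      r.choose t ≤ #{T ∈ Finset.powersetCard t Finset.univ | B ∈ Finset.Ici T} := by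
    simp only [𝒜, Finset.forall_mem_insert, Finset.notMem_empty, IsEmpty.forall_iff,
      implies_true, Finset.forall_mem_image, true_and]
    intro M hM B hB
    rw [Finset.card_filter_mem_Ici_powersetCard, card_of_mem_baseFinset hB, ((hPmem M).1 hM).2.2]
  have hbound := Finset.card_le_rpow_of_card_image_inter_le (Nat.choose_pos htr) _ _ 𝒜 hcov
    fun T hT => card_image_inter_Ici_le 𝓜 hcontract hiso (fun M => (hPmem M).1)
      (fun N => (hQmem N).2) (Finset.mem_powersetCard.1 hT).2
  rw [Finset.card_powersetCard, Finset.card_univ, Fintype.card_fin, h𝒜] at hbound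
  rw [hPcount, hQcount]
  exact_mod_cast hbound

end counting

end PavingEnum

lemma Nat.choose_div_choose_eq_choose_div_choose {n r t : ℕ} (htr : t ≤ r) (hrn : r ≤ n) :
    (n.choose t : ℝ) / r.choose t = n.choose r / (n - t).choose (r - t) := by
  rw [div_eq_div_iff (mod_cast (Nat.choose_pos htr).ne')
    (mod_cast (Nat.choose_pos (Nat.sub_le_sub_right hrn t)).ne')]
  exact_mod_cast (Nat.choose_mul htr).symm

/-- If 𝓜 is a class of matroids closed under contraction and isomorphism,
and 0 ≤ t ≤ r ≤ n, then
log(\tilde m(n,r) + 1) ≤ (C(n,r)/C(n−t,r−t)) · log(\tilde m(n−t,r−t) + 1). -/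
theorem class_count_blowup (𝓜 : ∀ ⦃α : Type⦄, Matroid α → Prop)
    (hcontract : ∀ (α : Type) (M : Matroid α) (C : Set α), 𝓜 M → 𝓜 (mcontract M C))
    (hiso : ∀ (α β : Type) (M : Matroid α) (N : Matroid β), 𝓜 M → MatroidIso M N → 𝓜 N)
    (t r n : ℕ) (htr : t ≤ r) (hrn : r ≤ n) :
    Real.log (classCount 𝓜 n r + 1) ≤
      ((n.choose r : ℝ) / ((n - t).choose (r - t) : ℝ)) *
        Real.log (classCount 𝓜 (n - t) (r - t) + 1) := by
  calc Real.log (classCount 𝓜 n r + 1)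
      ≤ Real.log ((classCount 𝓜 (n - t) (r - t) + 1 : ℝ) ^ ((n.choose t : ℝ) / r.choose t)) :=
        Real.log_le_log (by positivity) (classCount_add_one_le_rpow 𝓜 hcontract hiso htr)
    _ = _ := by
        rw [Real.log_rpow (by positivity), Nat.choose_div_choose_eq_choose_div_choose htr hrn]
end

section
/- For all integers r and n with 3 ≤ r < n, p(n,r) ≥ ( 1 + ( n/r − n/(n−1) ) · C(n,r−1) ) · D(r−1, r, n), the inequality being taken in the real numbers. -/
open Matroid Set Filter Real

namespace PavingEnum

/-- A Steiner system S(r−1, r, n): a collection of r-element subsets (blocks) of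
`{1, …, n}` such that every (r−1)-element subset is contained in exactly one block. -/
def IsSteinerSystem (n r : ℕ) (𝓑 : Finset (Finset (Fin n))) : Prop :=
  (∀ B ∈ 𝓑, B.card = r) ∧
  ∀ T : Finset (Fin n), T.card = r - 1 → ∃! B, B ∈ 𝓑 ∧ T ⊆ B

/-- `numSteiner n r` : the number of Steiner systems S(r−1, r, n). -/
noncomputable def numSteiner (n r : ℕ) : ℕ :=
  {𝓑 : Finset (Finset (Fin n)) | IsSteinerSystem n r 𝓑}.ncard

end PavingEnum

open PavingEnum

/-! A Steiner system `S(r-1, r, n)` has `b = C(n, r-1) / r` blocks, and two distinct blocks meet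
in at most `r - 2` points. Any family of `r`-sets with this property is the family of
circuit-hyperplanes of a sparse paving matroid of rank `r`: its independent sets are the sets of
size at most `r` outside the family. Removing at most two blocks from a Steiner system gives
`1 + b + C(b, 2)` such families, and the Steiner system can be recovered from each of them: if two
Steiner systems share a subfamily `D` missing at most two blocks of each, a block of the first
outside the second would have its `r ≥ 3` subsets of size `r - 1` covered by `r` distinct blocks
of the second, all outside `D`. Hence
`p(n, r) ≥ (1 + b + C(b, 2)) · D(r-1, r, n)`. Finally, `C(n, 2) ≤ C(n, r-1)` gives
`b ≥ n(n-1)/(2r)`, and with `4r(n-1-r) ≤ (n-1)²` this bounds `1 + b + C(b, 2)` from below by the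
expression in the theorem. -/

open Finset

namespace PavingEnum

section SparsePaving

variable {α : Type*} [DecidableEq α] {r : ℕ} {D : Finset (Finset α)}

def IsSparsePavingFamily (r : ℕ) (D : Finset (Finset α)) : Prop :=
  (∀ X ∈ D, #X = r) ∧ (D : Set (Finset α)).Pairwise fun X Y => #(X ∩ Y) + 2 ≤ r

theorem IsSparsePavingFamily.mono {D' : Finset (Finset α)} (hD : IsSparsePavingFamily r D)
    (h : D' ⊆ D) : IsSparsePavingFamily r D' :=
  ⟨fun X hX => hD.1 X (h hX), hD.2.mono (coe_subset.2 h)⟩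

theorem IsSparsePavingFamily.insert_notMem_or_insert_notMem (hD : IsSparsePavingFamily r D)
    {I : Finset α} {a b : α} (ha : a ∉ I) (hab : a ≠ b) :
    insert a I ∉ D ∨ insert b I ∉ D := by
  rw [← not_and_or]
  rintro ⟨haD, hbD⟩
  have hne : insert a I ≠ insert b I := fun h => by
    have := h ▸ mem_insert_self a I
    simp [hab, ha] at this
  have hinter : #I ≤ #(insert a I ∩ insert b I) :=
    Finset.card_le_card (subset_inter (subset_insert a I) (subset_insert b I))
  have hcard := hD.1 _ haD
  rw [card_insert_of_notMem ha] at hcard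
  have := hD.2 haD hbD hne
  omega

theorem IsSparsePavingFamily.indep_subset (hD : IsSparsePavingFamily r D) {I J : Finset α}
    (hJ : #J ≤ r ∧ J ∉ D) (hIJ : I ⊆ J) : #I ≤ r ∧ I ∉ D := by
  refine ⟨(Finset.card_le_card hIJ).trans hJ.1, fun hI => hJ.2 ?_⟩
  rwa [← Finset.eq_of_subset_of_card_le hIJ (hD.1 I hI ▸ hJ.1)]

theorem IsSparsePavingFamily.exists_insert_indep (hD : IsSparsePavingFamily r D)
    {I A : Finset α} (hI : #I < r) (hA : 1 < #(A \ I)) :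
    ∃ e ∈ A, e ∉ I ∧ #(insert e I) ≤ r ∧ insert e I ∉ D := by
  obtain ⟨a, ha, b, hb, hab⟩ := one_lt_card.1 hA
  rw [Finset.mem_sdiff] at ha hb
  have hcard : ∀ e ∉ I, #(insert e I) ≤ r := fun e he => by
    rw [card_insert_of_notMem he]
    omega
  rcases hD.insert_notMem_or_insert_notMem ha.2 hab with h | h
  exacts [⟨a, ha.1, ha.2, hcard a ha.2, h⟩, ⟨b, hb.1, hb.2, hcard b hb.2, h⟩]

theorem IsSparsePavingFamily.indep_aug (hD : IsSparsePavingFamily r D) {I J : Finset α}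
    (hI : #I ≤ r ∧ I ∉ D) (hJ : #J ≤ r ∧ J ∉ D) (hlt : #I < #J) :
    ∃ e ∈ J, e ∉ I ∧ #(insert e I) ≤ r ∧ insert e I ∉ D := by
  by_cases hIJ : I ⊆ J
  · obtain ⟨e, heJ, heI⟩ := exists_mem_notMem_of_card_lt_card hlt
    exact ⟨e, heJ, heI, hD.indep_subset hJ (insert_subset heJ hIJ)⟩
  · have hinter : #(J ∩ I) < #I :=
      card_lt_card ⟨inter_subset_right, fun h => hIJ fun x hx => (mem_inter.1 (h hx)).1⟩
    have := card_sdiff_add_card_inter J I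
    exact hD.exists_insert_indep (by omega) (by omega)

/-- The sparse paving matroid of rank `r` whose circuit-hyperplanes are the members of `D`. -/
def sparsePavingMatroid (hr : 0 < r) (hD : IsSparsePavingFamily r D) : Matroid α :=
  (IndepMatroid.ofFinset Set.univ (fun I => #I ≤ r ∧ I ∉ D)
    ⟨by simp, fun h => by simpa [← hD.1 ∅ h] using hr.ne'⟩
    (fun _ _ hJ hIJ => hD.indep_subset hJ hIJ)
    (fun _ _ hI hJ hlt => hD.indep_aug hI hJ hlt)
    (fun _ _ => Set.subset_univ _)).matroid

variable {hr : 0 < r} {hD : IsSparsePavingFamily r D}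

@[simp]
theorem sparsePavingMatroid_indep_coe {I : Finset α} :
    (sparsePavingMatroid hr hD).Indep I ↔ #I ≤ r ∧ I ∉ D := by
  simp [sparsePavingMatroid]

theorem sparsePavingMatroid_E : (sparsePavingMatroid hr hD).E = Set.univ := rfl

variable [Fintype α]

theorem ncard_of_isBase_sparsePavingMatroid (hrα : r < Fintype.card α) {B : Set α}
    (hB : (sparsePavingMatroid hr hD).IsBase B) : B.ncard = r := by
  lift B to Finset α using B.toFinite
  have hind := sparsePavingMatroid_indep_coe.1 hB.indep
  rw [Set.ncard_coe_finset]
  by_contra hne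
  have hcompl : #(Finset.univ \ B) = Fintype.card α - #B := by
    rw [card_sdiff_of_subset (subset_univ B), card_univ]
  obtain ⟨e, -, heB, hins⟩ := hD.exists_insert_indep (A := Finset.univ) (I := B) (by omega)
    (by omega)
  have hBe := hB.eq_of_subset_indep (sparsePavingMatroid_indep_coe.2 hins)
    (by simp [Set.subset_insert])
  exact heB (by rw [Finset.coe_inj.1 hBe]; exact mem_insert_self e B)

theorem mrk_sparsePavingMatroid (hrα : r < Fintype.card α) :
    mrk (sparsePavingMatroid hr hD) = r := by
  obtain ⟨B, hB⟩ := (sparsePavingMatroid hr hD).exists_isBase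
  have hranks : {k | ∃ B, (sparsePavingMatroid hr hD).IsBase B ∧ B.ncard = k} = {r} := by
    refine Set.eq_singleton_iff_unique_mem.2
      ⟨⟨B, hB, ncard_of_isBase_sparsePavingMatroid hrα hB⟩, ?_⟩
    rintro _ ⟨B', hB', rfl⟩
    exact ncard_of_isBase_sparsePavingMatroid hrα hB'
  rw [mrk, hranks, csSup_singleton]

theorem paving_sparsePavingMatroid (hrα : r < Fintype.card α) :
    Paving (sparsePavingMatroid hr hD) := by
  intro C hC
  rw [mrk_sparsePavingMatroid hrα]
  by_contra! hlt
  lift C to Finset α using C.toFinite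
  rw [Set.encard_coe_eq_coe_finsetCard, Nat.cast_lt] at hlt
  exact hC.1.not_indep (sparsePavingMatroid_indep_coe.2
    ⟨hlt.le, fun hC => (hD.1 C hC).not_lt hlt⟩)

open Classical in
noncomputable def dependentSetsOfCard (M : Matroid α) (r : ℕ) : Finset (Finset α) :=
  Finset.univ.filter fun X => #X = r ∧ ¬ M.Indep X

theorem dependentSetsOfCard_sparsePavingMatroid :
    dependentSetsOfCard (sparsePavingMatroid hr hD) r = D := by
  ext X
  simp only [dependentSetsOfCard, Finset.mem_filter, Finset.mem_univ, true_and,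
    sparsePavingMatroid_indep_coe, not_and, not_not]
  exact ⟨fun ⟨hX, h⟩ => h hX.le, fun hX => ⟨hD.1 X hX, fun _ => hX⟩⟩

end SparsePaving

instance {α : Type*} [Finite α] : Finite (Matroid α) :=
  Finite.of_injective (fun M => (M.E, M.Indep)) fun _ _ h =>
    Matroid.ext_indep (congrArg Prod.fst h) fun I _ =>
      Iff.of_eq (congrFun (congrArg Prod.snd h) I)

theorem card_le_numPaving {n r : ℕ} (hr : 0 < r) (hrn : r < n)
    (U : Finset (Finset (Finset (Fin n)))) (hU : ∀ D ∈ U, IsSparsePavingFamily r D) :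
    #U ≤ numPaving n r := by
  set P := {M : Matroid (Fin n) | M.E = Set.univ ∧ mrk M = r ∧ Paving M}
  have hrα : r < Fintype.card (Fin n) := by simpa using hrn
  have hUP : (U : Set (Finset (Finset (Fin n)))) ⊆ (dependentSetsOfCard · r) '' P :=
    fun D hD => ⟨sparsePavingMatroid hr (hU D hD),
      ⟨sparsePavingMatroid_E, mrk_sparsePavingMatroid hrα, paving_sparsePavingMatroid hrα⟩,
      dependentSetsOfCard_sparsePavingMatroid⟩
  calc #U = (U : Set (Finset (Finset (Fin n)))).ncard := (Set.ncard_coe_finset U).symm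
    _ ≤ ((dependentSetsOfCard · r) '' P).ncard := Set.ncard_le_ncard hUP (Set.toFinite _)
    _ ≤ numPaving n r := Set.ncard_image_le (Set.toFinite P)

theorem union_eq_of_card_add_one {β : Type*} [DecidableEq β] {X T T' : Finset β}
    (hT : T ⊆ X) (hT' : T' ⊆ X) (hne : T ≠ T') (hc : #T + 1 = #X) (hc' : #T' + 1 = #X) :
    T ∪ T' = X := by
  refine Finset.eq_of_subset_of_card_le (union_subset hT hT') ?_
  have : #T < #(T ∪ T') := Finset.card_lt_card ⟨subset_union_left, fun h => hne
    (Finset.eq_of_subset_of_card_le (subset_union_right.trans h) (by omega)).symm⟩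
  omega

section Steiner

variable {n r : ℕ} {S S₁ S₂ D : Finset (Finset (Fin n))}

theorem IsSteinerSystem.isSparsePavingFamily (hS : IsSteinerSystem n r S) :
    IsSparsePavingFamily r S := by
  refine ⟨hS.1, fun B₁ h₁ B₂ h₂ hne => ?_⟩
  by_contra! h
  obtain ⟨T, hT, hTc⟩ := exists_subset_card_eq (show r - 1 ≤ #(B₁ ∩ B₂) by omega)
  exact hne ((hS.2 T hTc).unique ⟨h₁, hT.trans inter_subset_left⟩
    ⟨h₂, hT.trans inter_subset_right⟩)

theorem IsSteinerSystem.card_mul (hS : IsSteinerSystem n r S) (hr : 0 < r) :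
    #S * r = n.choose (r - 1) := by
  have hblock : ∀ B ∈ S,
      #((Finset.univ.powersetCard (r - 1)).bipartiteAbove (fun B T => T ⊆ B) B) = r := by
    intro B hB
    have : (Finset.univ.powersetCard (r - 1)).bipartiteAbove (fun B T => T ⊆ B) B =
        B.powersetCard (r - 1) := by
      ext T
      simp [mem_bipartiteAbove, mem_powersetCard, and_comm]
    rw [this, card_powersetCard, hS.1 B hB,
      Nat.choose_symm_of_eq_add (show r = r - 1 + 1 by omega), Nat.choose_one_right]
  have hsubset : ∀ T ∈ Finset.univ.powersetCard (r - 1),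
      #(S.bipartiteBelow (fun B T => T ⊆ B) T) = 1 := by
    intro T hT
    rw [mem_powersetCard] at hT
    exact card_eq_one_iff_existsUnique.2 (by simpa [mem_bipartiteBelow] using hS.2 T hT.2)
  simpa using card_mul_eq_card_mul _ hblock hsubset

theorem IsSteinerSystem.subset_of_card_sdiff_lt (hS₁ : IsSteinerSystem n r S₁)
    (hS₂ : IsSteinerSystem n r S₂) (hD : D ⊆ S₁) (hlt : #(S₂ \ D) < r) : S₁ ⊆ S₂ := by
  intro X hX
  by_contra hX₂
  have hXc := hS₁.1 X hX
  suffices #(X.powersetCard (r - 1)) ≤ #(S₂ \ D) by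
    rw [card_powersetCard, hXc, Nat.choose_symm_of_eq_add (show r = r - 1 + 1 by omega),
      Nat.choose_one_right] at this
    omega
  -- The blocks of `S₂` covering the `(r-1)`-subsets of `X` avoid `D` and are pairwise distinct.
  refine card_le_card_of_forall_subsingleton (fun T B => T ⊆ B) (fun T hT => ?_) ?_
  · rw [mem_powersetCard] at hT
    obtain ⟨B, ⟨hB, hTB⟩, -⟩ := hS₂.2 T hT.2
    refine ⟨B, Finset.mem_sdiff.2 ⟨hB, fun hBD => hX₂ ?_⟩, hTB⟩
    rwa [← (hS₁.2 T hT.2).unique ⟨hD hBD, hTB⟩ ⟨hX, hT.1⟩]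
  · intro B hB T ⟨hT, hTB⟩ T' ⟨hT', hT'B⟩
    rw [Finset.mem_sdiff] at hB
    rw [mem_powersetCard] at hT hT'
    by_contra hne
    have hXB : X ⊆ B :=
      union_eq_of_card_add_one hT.1 hT'.1 hne (by omega) (by omega) ▸ union_subset hTB hT'B
    rw [Finset.eq_of_subset_of_card_le hXB (by rw [hS₂.1 B hB.1, hXc])] at hX₂
    exact hX₂ hB.1

theorem IsSteinerSystem.eq_of_card_sdiff_lt (hS₁ : IsSteinerSystem n r S₁)
    (hS₂ : IsSteinerSystem n r S₂) (h₁ : D ⊆ S₁) (h₂ : D ⊆ S₂) (hlt₁ : #(S₁ \ D) < r)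
    (hlt₂ : #(S₂ \ D) < r) : S₁ = S₂ :=
  (hS₁.subset_of_card_sdiff_lt hS₂ h₁ hlt₂).antisymm (hS₂.subset_of_card_sdiff_lt hS₁ h₂ hlt₁)

end Steiner

theorem card_filter_card_sdiff_le_two {β : Type*} [DecidableEq β] (S : Finset β) :
    #{D ∈ S.powerset | #(S \ D) ≤ 2} = 1 + #S + (#S).choose 2 := by
  have hcompl : #{D ∈ S.powerset | #(S \ D) ≤ 2} = #{E ∈ S.powerset | #E ≤ 2} := by
    refine card_nbij' (S \ ·) (S \ ·) (fun D hD => ?_) (fun E hE => ?_) (fun D hD => ?_)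
      (fun E hE => ?_) <;>
      simp only [coe_filter, Finset.mem_powerset, Set.mem_ofPred_eq] at *
    · exact ⟨Finset.sdiff_subset, hD.2⟩
    · exact ⟨Finset.sdiff_subset, by rw [Finset.sdiff_sdiff_eq_self hE.1]; exact hE.2⟩
    · exact Finset.sdiff_sdiff_eq_self hD.1
    · exact Finset.sdiff_sdiff_eq_self hE.1
  have hfiber : ∀ k ∈ range 3, #{E ∈ {E ∈ S.powerset | #E ≤ 2} | #E = k} = (#S).choose k := by
    intro k hk
    rw [filter_filter, ← card_powersetCard, powersetCard_eq_filter]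
    congr 1
    refine filter_congr fun E _ => ?_
    simp only [Finset.mem_range] at hk
    omega
  have hcard : ∀ E ∈ {E ∈ S.powerset | #E ≤ 2}, #E ∈ range 3 := fun E hE => by
    simp only [mem_filter] at hE
    simp only [Finset.mem_range]
    omega
  rw [hcompl, card_eq_sum_card_fiberwise hcard, sum_congr rfl hfiber]
  simp [sum_range_succ]

theorem div_sub_div_mul_le {n r b : ℝ} (hr : 0 < r) (hrn : r + 1 ≤ n)
    (hb : n * (n - 1) ≤ 2 * (b * r)) :
    (n / r - n / (n - 1)) * (b * r) ≤ b + b * (b - 1) / 2 := by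
  have hn1 : 0 < n - 1 := by linarith
  have hb0 : 0 < b := by nlinarith
  have hamgm : 4 * r * (n - 1 - r) ≤ (n - 1) ^ 2 := by nlinarith [sq_nonneg (n - 1 - 2 * r)]
  have : (n / r - n / (n - 1)) * (b * r) = b * n * (n - 1 - r) / (n - 1) := by
    field_simp
  have hn0 : 0 ≤ n := by linarith
  have hkey : 2 * (n * (n - 1 - r)) ≤ b * (n - 1) := by
    refine le_of_mul_le_mul_left ?_ (by positivity : 0 < 2 * r)
    nlinarith [mul_le_mul_of_nonneg_left hamgm hn0, mul_le_mul_of_nonneg_right hb hn1.le]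
  rw [this, div_le_iff₀ hn1]
  nlinarith [mul_le_mul_of_nonneg_left hkey hb0.le]

theorem choose_two_le_choose {n k : ℕ} (hk : 2 ≤ k) (hkn : k + 2 ≤ n) :
    n.choose 2 ≤ n.choose k := by
  have hmono : ∀ k, 2 ≤ k → k ≤ n / 2 → n.choose 2 ≤ n.choose k := by
    intro k hk
    induction k, hk using Nat.le_induction with
    | base => exact fun _ => le_rfl
    | succ k _ ih =>
      exact fun h => (ih (by omega)).trans (Nat.choose_le_succ_of_lt_half_left (by omega))
  rcases le_or_gt k (n / 2) with h | h
  · exact hmono k hk h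
  · rw [← Nat.choose_symm (by omega : k ≤ n)]
    exact hmono (n - k) (by omega) (by omega)

theorem IsSteinerSystem.bound_le_card_filter {n r : ℕ} {S : Finset (Finset (Fin n))}
    (hS : IsSteinerSystem n r S) (hr : 3 ≤ r) (hrn : r < n) :
    1 + ((n : ℝ) / r - n / (n - 1)) * n.choose (r - 1) ≤
      #{D ∈ S.powerset | #(S \ D) ≤ 2} := by
  have hbr := hS.card_mul (by omega)
  have hreal : (n : ℝ) * (n - 1) ≤ 2 * (#S * r) := by
    have h2 : (n.choose 2 : ℝ) ≤ n.choose (r - 1) := by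
      exact_mod_cast choose_two_le_choose (by omega) (by omega)
    rw [Nat.cast_choose_two, ← hbr] at h2
    push_cast at h2
    linarith
  rw [card_filter_card_sdiff_le_two, ← hbr]
  push_cast
  rw [Nat.cast_choose_two]
  linarith [div_sub_div_mul_le (by positivity : (0 : ℝ) < r) (by exact_mod_cast hrn) hreal]

end PavingEnum

/-- For 3 ≤ r < n, p(n,r) ≥ (1 + (n/r − n/(n−1)) · C(n,r−1)) · D(r−1, r, n). -/
theorem paving_vs_steiner (n r : ℕ) (hr : 3 ≤ r) (hrn : r < n) :
    (1 + ((n : ℝ) / r - (n : ℝ) / ((n : ℝ) - 1)) * (n.choose (r - 1) : ℝ)) *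
        (numSteiner n r : ℝ) ≤ (numPaving n r : ℝ) := by
  classical
  set steiner : Finset (Finset (Finset (Fin n))) := Finset.univ.filter (IsSteinerSystem n r)
  set nearby : Finset (Finset (Fin n)) → Finset (Finset (Finset (Fin n))) :=
    fun S => {D ∈ S.powerset | #(S \ D) ≤ 2}
  have hsteiner : numSteiner n r = #steiner := by
    simp [numSteiner, steiner, ← Set.ncard_coe_finset]
  have hdisj : (steiner : Set (Finset (Finset (Fin n)))).PairwiseDisjoint nearby := by
    intro S₁ h₁ S₂ h₂ hne
    refine Finset.disjoint_left.2 fun D hD₁ hD₂ => hne ?_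
    simp only [nearby, mem_filter, Finset.mem_powerset] at hD₁ hD₂
    exact (mem_filter.1 h₁).2.eq_of_card_sdiff_lt (mem_filter.1 h₂).2 hD₁.1 hD₂.1 (by omega)
      (by omega)
  have hsparse : ∀ D ∈ steiner.biUnion nearby, IsSparsePavingFamily r D := by
    simp only [Finset.mem_biUnion, nearby, mem_filter, Finset.mem_powerset]
    rintro D ⟨S, hS, hDS, -⟩
    exact (mem_filter.1 hS).2.isSparsePavingFamily.mono hDS
  calc _ = ∑ S ∈ steiner, (1 + ((n : ℝ) / r - n / (n - 1)) * n.choose (r - 1)) := by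
        rw [hsteiner, sum_const, nsmul_eq_mul, mul_comm]
    _ ≤ ∑ S ∈ steiner, (#(nearby S) : ℝ) :=
        sum_le_sum fun S hS => (mem_filter.1 hS).2.bound_le_card_filter hr hrn
    _ = #(steiner.biUnion nearby) := by rw [card_biUnion hdisj]; push_cast; rfl
    _ ≤ numPaving n r := by exact_mod_cast card_le_numPaving (by omega) hrn _ hsparse
end

section
/- Let E be a finite set of cardinality n, let 0 < r < n, and let 𝓑 be a collection of r-element subsets of E. Then 𝓑 is the collection of bases of a sparse paving matroid on E of rank r if and only if the complement of 𝓑 in the set of all r-element subsets of E is a stable set in the Johnson graph J(E,r). -/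
open Matroid Set Filter Real

open PavingEnum

/-! For a matroid of rank `r` on a finite set, paving says that every set of fewer than `r`
elements is independent, and paving of the dual says that every set of more than `r` elements
is spanning. If two dependent `r`-sets `X`, `Y` met in `r - 1` elements, then `X ∩ Y` would be
independent and `X ∪ Y` spanning, and submodularity of the rank function would give
`(r - 1) + r ≤ rk X + rk Y ≤ 2 (r - 1)`.

Conversely, stability of the non-members of `𝓑` in `J(E, r)` says that for every `(r - 1)`-set `S`
at most one of the `r`-sets `S + e` lies outside `𝓑`. This gives the basis exchange axiom, and
shows that every set of fewer than `r` elements lies in a member of `𝓑` while every set of more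
than `r` elements contains one: the matroid with bases `𝓑` is sparse paving. -/

namespace PavingEnum

variable {α : Type*} {M : Matroid α} {B C I X Y : Set α}

theorem isCircuit_iff : IsCircuit M C ↔ M.IsCircuit C := by
  rw [Matroid.isCircuit_iff_forall_ssubset, IsCircuit]

theorem _root_.Matroid.IsBase.mrk_eq_s14 (hB : M.IsBase B) : mrk M = B.ncard := by
  have hset : {n : ℕ | ∃ B, M.IsBase B ∧ B.ncard = n} = {B.ncard} := by
    ext n
    refine ⟨?_, fun hn => ⟨B, hB, hn.symm⟩⟩
    rintro ⟨B', hB', rfl⟩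
    exact hB'.ncard_eq_ncard_of_isBase hB
  rw [mrk, hset, csSup_singleton]

theorem _root_.Matroid.Indep.isBase_of_ncard_eq_mrk [M.Finite] (hI : M.Indep I)
    (h : I.ncard = mrk M) : M.IsBase I := by
  obtain ⟨B, hB, hIB⟩ := hI.exists_isBase_superset
  rwa [Set.eq_of_subset_of_ncard_le hIB (by rw [h, hB.mrk_eq_s14]) hB.finite]

theorem mrk_le_ncard_ground [M.Finite] : mrk M ≤ M.E.ncard := by
  obtain ⟨B, hB⟩ := M.exists_isBase
  exact hB.mrk_eq_s14 ▸ Set.ncard_le_ncard hB.subset_ground M.ground_finite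

theorem mrk_dual [M.Finite] : mrk M✶ = M.E.ncard - mrk M := by
  obtain ⟨B, hB⟩ := M.exists_isBase
  rw [hB.mrk_eq_s14, hB.compl_isBase_dual.mrk_eq_s14, Set.ncard_sdiff hB.subset_ground hB.finite]

theorem paving_iff [M.Finite] : Paving M ↔ ∀ I ⊆ M.E, I.ncard < mrk M → M.Indep I := by
  refine ⟨fun h I hIE hI => ?_, fun h C hC => ?_⟩
  · by_contra hdep
    obtain ⟨C, hCI, hC⟩ := ((M.not_indep_iff hIE).1 hdep).exists_isCircuit_subset
    have hCr := h C (isCircuit_iff.2 hC)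
    rw [← (M.ground_finite.subset hC.subset_ground).cast_ncard_eq, Nat.cast_le] at hCr
    exact hI.not_ge (hCr.trans (Set.ncard_le_ncard hCI (M.ground_finite.subset hIE)))
  · have hC := isCircuit_iff.1 hC
    rw [← (M.ground_finite.subset hC.subset_ground).cast_ncard_eq, Nat.cast_le]
    by_contra! hlt
    exact hC.not_indep (h C hC.subset_ground hlt)

theorem paving_dual_iff [M.Finite] :
    Paving M✶ ↔ ∀ X ⊆ M.E, mrk M < X.ncard → M.Spanning X := by
  have hr : mrk M ≤ M.E.ncard := mrk_le_ncard_ground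
  rw [paving_iff, mrk_dual, dual_ground]
  refine ⟨fun h X hXE hX => ?_, fun h I hIE hI => ?_⟩
  · have hXE' := Set.ncard_le_ncard hXE M.ground_finite
    have hcompl := h (M.E \ X) Set.sdiff_subset
      (by rw [Set.ncard_sdiff hXE (M.ground_finite.subset hXE)]; omega)
    rwa [← coindep_def, coindep_iff_compl_spanning, Set.sdiff_sdiff_cancel_left hXE] at hcompl
  · rw [← coindep_def, coindep_iff_compl_spanning]
    exact h _ Set.sdiff_subset (by rw [Set.ncard_sdiff hIE (M.ground_finite.subset hIE)]; omega)

theorem SparsePaving.ncard_inter_ne_of_dep [M.Finite] (hM : SparsePaving M) (hX : M.Dep X)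
    (hY : M.Dep Y) (hXr : X.ncard = mrk M) (hYr : Y.ncard = mrk M) :
    (X ∩ Y).ncard ≠ mrk M - 1 := by
  intro hXY
  have hXfin := M.ground_finite.subset hX.subset_ground
  have hYfin := M.ground_finite.subset hY.subset_ground
  have hr : 0 < mrk M := hXr ▸ (Set.ncard_pos hXfin).2 hX.nonempty
  have hI : M.Indep (X ∩ Y) :=
    paving_iff.1 hM.1 _ (Set.inter_subset_left.trans hX.subset_ground) (by omega)
  have hS : M.Spanning (X ∪ Y) :=
    paving_dual_iff.1 hM.2 _ (Set.union_subset hX.subset_ground hY.subset_ground)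
      (by have := Set.ncard_union_add_ncard_inter X Y hXfin hYfin; omega)
  obtain ⟨B, hB⟩ := M.exists_isBase
  -- submodularity reads `(r - 1) + r ≤ rk X + rk Y`, while `rk X, rk Y < r`
  have hsub := M.eRk_inter_add_eRk_union_le X Y
  have hXlt := eRk_lt_encard_of_dep_of_finite hXfin hX
  have hYlt := eRk_lt_encard_of_dep_of_finite hYfin hY
  rw [hI.eRk_eq_encard, hS.eRk_eq, ← hB.encard_eq_eRank, ← hB.finite.cast_ncard_eq, ← hB.mrk_eq_s14,
    ← (hXfin.inter_of_left Y).cast_ncard_eq, hXY] at hsub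
  rw [← hXfin.cast_ncard_eq, hXr] at hXlt
  rw [← hYfin.cast_ncard_eq, hYr] at hYlt
  lift M.eRk X to ℕ using hXlt.ne_top with a
  lift M.eRk Y to ℕ using hYlt.ne_top with b
  norm_cast at hsub hXlt hYlt
  omega

end PavingEnum

/-- The `r`-sets outside `𝓑` form a stable set of the Johnson graph `J(α, r)`. -/
def JohnsonStableCompl {α : Type*} [DecidableEq α] (r : ℕ) (𝓑 : Finset (Finset α)) : Prop :=
  ∀ X Y : Finset α, X.card = r → Y.card = r → X ∉ 𝓑 → Y ∉ 𝓑 → (X ∩ Y).card ≠ r - 1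

namespace JohnsonStableCompl

variable {α : Type*} [DecidableEq α] {r : ℕ} {𝓑 : Finset (Finset α)} {S T B₁ B₂ : Finset α}
  {a b x : α}

theorem insert_mem_or_insert_mem (hst : JohnsonStableCompl r 𝓑) (hr : 0 < r)
    (hS : S.card = r - 1) (ha : a ∉ S) (hb : b ∉ S) (hab : a ≠ b) :
    insert a S ∈ 𝓑 ∨ insert b S ∈ 𝓑 := by
  by_contra! h
  refine hst _ _ ?_ ?_ h.1 h.2 ?_
  · rw [Finset.card_insert_of_notMem ha]; omega
  · rw [Finset.card_insert_of_notMem hb]; omega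
  · rw [Finset.insert_inter_of_notMem (by simp [hab, ha]), Finset.inter_insert_of_notMem hb,
      Finset.inter_self, hS]

theorem exists_mem_superset [Fintype α] (hst : JohnsonStableCompl r 𝓑) (hr : 0 < r)
    (hrα : r < Fintype.card α) (hS : S.card < r) : ∃ B ∈ 𝓑, S ⊆ B := by
  obtain ⟨S', hSS', -, hS'⟩ := Finset.exists_subsuperset_card_eq (Finset.subset_univ S)
    (Nat.le_sub_one_of_lt hS) (by rw [Finset.card_univ]; omega)
  obtain ⟨a, ha, b, hb, hab⟩ := Finset.one_lt_card.1 (show 1 < S'ᶜ.card by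
    rw [Finset.card_compl]; omega)
  rw [Finset.mem_compl] at ha hb
  rcases hst.insert_mem_or_insert_mem hr hS' ha hb hab with h | h
  · exact ⟨_, h, hSS'.trans (Finset.subset_insert _ _)⟩
  · exact ⟨_, h, hSS'.trans (Finset.subset_insert _ _)⟩

theorem exists_mem_subset (hst : JohnsonStableCompl r 𝓑) (hr : 0 < r) (hT : r < T.card) :
    ∃ B ∈ 𝓑, B ⊆ T := by
  obtain ⟨T', hT'T, hT'⟩ := Finset.exists_subset_card_eq (Nat.succ_le_of_lt hT)
  obtain ⟨a, ha, b, hb, hab⟩ := Finset.one_lt_card.1 (show 1 < T'.card by omega)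
  have hS : ((T'.erase a).erase b).card = r - 1 := by
    rw [Finset.card_erase_of_mem (Finset.mem_erase.2 ⟨hab.symm, hb⟩),
      Finset.card_erase_of_mem ha, hT']
    omega
  rcases hst.insert_mem_or_insert_mem hr hS (by simp) (by simp) hab with h | h
  · rw [Finset.erase_right_comm, Finset.insert_erase (Finset.mem_erase.2 ⟨hab, ha⟩)] at h
    exact ⟨_, h, (Finset.erase_subset _ _).trans hT'T⟩
  · rw [Finset.insert_erase (Finset.mem_erase.2 ⟨hab.symm, hb⟩)] at h
    exact ⟨_, h, (Finset.erase_subset _ _).trans hT'T⟩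

theorem exists_insert_erase_mem (hst : JohnsonStableCompl r 𝓑) (h𝓑 : ∀ B ∈ 𝓑, B.card = r)
    (hB₁ : B₁ ∈ 𝓑) (hB₂ : B₂ ∈ 𝓑) (hx : x ∈ B₁ \ B₂) :
    ∃ y ∈ B₂ \ B₁, insert y (B₁.erase x) ∈ 𝓑 := by
  obtain ⟨hxB₁, hxB₂⟩ := Finset.mem_sdiff.1 hx
  have hr : 0 < r := h𝓑 B₁ hB₁ ▸ Finset.card_pos.2 ⟨x, hxB₁⟩
  have hS : (B₁.erase x).card = r - 1 := by rw [Finset.card_erase_of_mem hxB₁, h𝓑 B₁ hB₁]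
  have hnotS : ∀ z ∈ B₂ \ B₁, z ∉ B₁.erase x :=
    fun z hz h => (Finset.mem_sdiff.1 hz).2 (Finset.mem_of_mem_erase h)
  obtain ⟨y, hy⟩ : (B₂ \ B₁).Nonempty := by
    rw [Finset.sdiff_nonempty]
    intro h
    rw [Finset.eq_of_subset_of_card_le h (by rw [h𝓑 B₁ hB₁, h𝓑 B₂ hB₂])] at hxB₂
    exact hxB₂ hxB₁
  -- if no exchange worked, stability would force `B₂ \ B₁ = {y}`, making `B₂` itself the exchange
  by_contra! hcon
  have hB₂y : B₂ ⊆ insert y (B₁.erase x) := by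
    intro z hz
    by_cases hzB₁ : z ∈ B₁
    · exact Finset.mem_insert_of_mem (Finset.mem_erase.2 ⟨fun h => hxB₂ (h ▸ hz), hzB₁⟩)
    have hz' : z ∈ B₂ \ B₁ := Finset.mem_sdiff.2 ⟨hz, hzB₁⟩
    obtain rfl : z = y := by
      by_contra hzy
      rcases hst.insert_mem_or_insert_mem hr hS (hnotS z hz') (hnotS y hy) hzy with h | h
      exacts [hcon z hz' h, hcon y hy h]
    exact Finset.mem_insert_self _ _
  have hcard : (insert y (B₁.erase x)).card ≤ B₂.card := by
    have := Finset.card_insert_le y (B₁.erase x)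
    rw [h𝓑 B₂ hB₂]
    omega
  exact hcon y hy (Finset.eq_of_subset_of_card_le hB₂y hcard ▸ hB₂)

theorem exchangeProperty (hst : JohnsonStableCompl r 𝓑) (h𝓑 : ∀ B ∈ 𝓑, B.card = r) :
    ExchangeProperty (fun B : Set α => ∃ B₀ ∈ 𝓑, ↑B₀ = B) := by
  rintro _ _ ⟨B₁, hB₁, rfl⟩ ⟨B₂, hB₂, rfl⟩ x hx
  rw [← Finset.coe_sdiff, Finset.mem_coe] at hx
  obtain ⟨y, hy, h⟩ := hst.exists_insert_erase_mem h𝓑 hB₁ hB₂ hx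
  exact ⟨y, by simpa using hy, _, h, by simp⟩

theorem exists_sparsePaving [Fintype α] (hst : JohnsonStableCompl r 𝓑) (hr : 0 < r)
    (hrα : r < Fintype.card α) (h𝓑 : ∀ B ∈ 𝓑, B.card = r) :
    ∃ M : Matroid α, M.E = Set.univ ∧ mrk M = r ∧ SparsePaving M ∧
      ∀ B : Finset α, M.IsBase ↑B ↔ B ∈ 𝓑 := by
  obtain ⟨B₀, hB₀, -⟩ := hst.exists_mem_superset hr hrα (S := ∅) (by simpa)
  let M := Matroid.ofIsBaseOfFinite Set.finite_univ (fun B : Set α => ∃ B₀ ∈ 𝓑, ↑B₀ = B)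
    ⟨_, B₀, hB₀, rfl⟩ (hst.exchangeProperty h𝓑) (fun _ _ => Set.subset_univ _)
  have hbase : ∀ B : Finset α, M.IsBase ↑B ↔ B ∈ 𝓑 := by simp [M]
  have hrk : mrk M = r := by rw [((hbase B₀).2 hB₀).mrk_eq_s14, Set.ncard_coe_finset, h𝓑 B₀ hB₀]
  refine ⟨M, rfl, hrk, ⟨paving_iff.2 fun I _ hI => ?_, paving_dual_iff.2 fun X _ hX => ?_⟩,
    hbase⟩
  · obtain ⟨I, rfl⟩ := (Set.toFinite I).exists_finset_coe
    rw [Set.ncard_coe_finset, hrk] at hI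
    obtain ⟨B, hB, hIB⟩ := hst.exists_mem_superset hr hrα hI
    exact Matroid.indep_iff.2 ⟨_, (hbase B).2 hB, by simpa⟩
  · obtain ⟨X, rfl⟩ := (Set.toFinite X).exists_finset_coe
    rw [Set.ncard_coe_finset, hrk] at hX
    obtain ⟨B, hB, hBX⟩ := hst.exists_mem_subset hr hX
    exact (spanning_iff_exists_isBase_subset (by simp [M])).2 ⟨_, (hbase B).2 hB, by simpa⟩

end JohnsonStableCompl

theorem PavingEnum.SparsePaving.johnsonStableCompl {α : Type*} [DecidableEq α] [Finite α]
    {r : ℕ} {𝓑 : Finset (Finset α)} {M : Matroid α} (hM : SparsePaving M) (hE : M.E = Set.univ)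
    (hrk : mrk M = r) (hbase : ∀ B : Finset α, M.IsBase ↑B ↔ B ∈ 𝓑) :
    JohnsonStableCompl r 𝓑 := by
  have : M.Finite := ⟨hE ▸ Set.finite_univ⟩
  have hdep : ∀ Z : Finset α, Z.card = r → Z ∉ 𝓑 → M.Dep ↑Z := fun Z hZ hZ𝓑 =>
    (M.not_indep_iff (by simp [hE])).1 fun hZi =>
      hZ𝓑 ((hbase Z).1 (hZi.isBase_of_ncard_eq_mrk (by simp [hZ, hrk])))
  intro X Y hX hY hX𝓑 hY𝓑
  have := hM.ncard_inter_ne_of_dep (hdep X hX hX𝓑) (hdep Y hY hY𝓑) (by simp [hX, hrk])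
    (by simp [hY, hrk])
  rwa [← Finset.coe_inter, Set.ncard_coe_finset, hrk] at this

/-- A collection 𝓑 of r-element subsets of an n-element set E (with 0 < r < n) is the
collection of bases of a sparse paving matroid of rank r on E if and only if its
complement in the set of all r-element subsets is a stable set in the Johnson graph
J(E,r), i.e. no two r-sets outside 𝓑 meet in exactly r−1 elements. -/
theorem sparse_paving_iff_johnson_stable {α : Type*} [Fintype α] [DecidableEq α]
    (n r : ℕ) (hcard : Fintype.card α = n) (hr0 : 0 < r) (hrn : r < n)
    (𝓑 : Finset (Finset α)) (h𝓑 : ∀ B ∈ 𝓑, B.card = r) :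
    (∃ M : Matroid α, M.E = Set.univ ∧ mrk M = r ∧ SparsePaving M ∧
        ∀ B : Finset α, M.IsBase ↑B ↔ B ∈ 𝓑) ↔
      ∀ X Y : Finset α, X.card = r → Y.card = r → X ∉ 𝓑 → Y ∉ 𝓑 →
        (X ∩ Y).card ≠ r - 1 :=
  ⟨fun ⟨_, hE, hrk, hM, hbase⟩ => hM.johnsonStableCompl hE hrk hbase,
    fun hst => JohnsonStableCompl.exists_sparsePaving hst hr0 (hcard ▸ hrn) h𝓑⟩
end
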